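/- arXiv:2303.14983 — 5 statements merged into one kernel-verified Lean document; each statement's English description precedes it below -/
import Mathlib

section
/- Every proper fractional ideal of a quadratic order is locally principal: if a is a fractional ideal of the order O_f of conductor f in a quadratic field K such that {α ∈ K : α·a ⊆ a} = O_f, then for every prime number p there exists a_p ∈ (K ⊗_ℚ ℚ_p)^× such that the image of a ⊗_ℤ ℤ_p in K_p = K ⊗_ℚ ℚ_p equals a_p·(O_f ⊗_ℤ ℤ_p). -/
open scoped TensorProduct
open Submodule

/-- The `ℚ_p`-algebra structure on `K ⊗_ℚ ℚ_p` (multiplication on the right factor). -/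
noncomputable instance (p : ℕ) [Fact p.Prime] (K : Type*) [Field K] [Algebra ℚ K] :
    Algebra ℚ_[p] (K ⊗[ℚ] ℚ_[p]) := Algebra.TensorProduct.rightAlgebra

/-- The `ℤ_p`-algebra structure on `K ⊗_ℚ ℚ_p`, via `ℤ_p → ℚ_p`. -/
noncomputable instance (p : ℕ) [Fact p.Prime] (K : Type*) [Field K] [Algebra ℚ K] :
    Algebra ℤ_[p] (K ⊗[ℚ] ℚ_[p]) :=
  ((algebraMap ℚ_[p] (K ⊗[ℚ] ℚ_[p])).comp (algebraMap ℤ_[p] ℚ_[p])).toAlgebra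

instance (p : ℕ) [Fact p.Prime] (K : Type*) [Field K] [Algebra ℚ K] :
    IsScalarTower ℤ_[p] ℚ_[p] (K ⊗[ℚ] ℚ_[p]) :=
  IsScalarTower.of_algebraMap_eq fun _ => rfl

namespace LocPrinc
variable {p : ℕ} [Fact p.Prime]

lemma exists_padicInt {u : ℚ_[p]} (h : ‖u‖ ≤ 1) : ∃ z : ℤ_[p], (z : ℚ_[p]) = u :=
  ⟨⟨u, h⟩, rfl⟩

lemma norm_coe_le (z : ℤ_[p]) : ‖(z : ℚ_[p])‖ ≤ 1 := z.2

variable {V : Type*} [CommRing V] [Algebra ℚ_[p] V] [Algebra ℤ_[p] V]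
  [IsScalarTower ℤ_[p] ℚ_[p] V]

lemma zsmul_eq (z : ℤ_[p]) (x : V) : z • x = ((z : ℚ_[p])) • x := by
  rw [← PadicInt.algebraMap_apply, algebraMap_smul]

lemma mem_span_pair_norm {x y : V}
    (hind : ∀ a b : ℚ_[p], a • x + b • y = 0 → a = 0 ∧ b = 0)
    (u v : ℚ_[p]) :
    u • x + v • y ∈ span ℤ_[p] ({x, y} : Set V) ↔ ‖u‖ ≤ 1 ∧ ‖v‖ ≤ 1 := by
  constructor
  · intro h
    obtain ⟨a, b, hab⟩ := Submodule.mem_span_pair.mp h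
    rw [zsmul_eq, zsmul_eq] at hab
    have h0 : (u - (a:ℚ_[p])) • x + (v - (b:ℚ_[p])) • y
        = (u • x + v • y) - ((a:ℚ_[p]) • x + (b:ℚ_[p]) • y) := by
      rw [sub_smul, sub_smul]; abel
    rw [hab, sub_self] at h0
    obtain ⟨h1, h2⟩ := hind _ _ h0
    rw [sub_eq_zero.mp h1, sub_eq_zero.mp h2]
    exact ⟨norm_coe_le a, norm_coe_le b⟩
  · rintro ⟨hu, hv⟩
    obtain ⟨a, ha⟩ := exists_padicInt hu
    obtain ⟨b, hb⟩ := exists_padicInt hv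
    exact Submodule.mem_span_pair.mpr ⟨a, b, by rw [zsmul_eq, zsmul_eq, ha, hb]⟩

lemma mem_span_pair_norm' {x y : V}
    (hind : ∀ a b : ℚ_[p], a • x + b • y = 0 → a = 0 ∧ b = 0)
    {w : V} (u v : ℚ_[p]) (hw : w = u • x + v • y) :
    w ∈ span ℤ_[p] ({x, y} : Set V) ↔ ‖u‖ ≤ 1 ∧ ‖v‖ ≤ 1 := by
  rw [hw]; exact mem_span_pair_norm hind u v

lemma pair_ind_transform {x y : V}
    (hind : ∀ a b : ℚ_[p], a • x + b • y = 0 → a = 0 ∧ b = 0)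
    {a b c d : ℚ_[p]} (hdet : a * d - b * c ≠ 0) :
    ∀ a' b' : ℚ_[p], a' • (a • x + b • y) + b' • (c • x + d • y) = 0 → a' = 0 ∧ b' = 0 := by
  intro a' b' h
  have h2 : (a' * a + b' * c) • x + (a' * b + b' * d) • y = 0 := by
    rw [← h]
    rw [smul_add, smul_add, smul_smul, smul_smul, smul_smul, smul_smul, add_smul, add_smul]
    abel
  obtain ⟨e1, e2⟩ := hind _ _ h2
  constructor
  · have : a' * (a * d - b * c) = d * (a' * a + b' * c) - c * (a' * b + b' * d) := by ring
    have h3 : a' * (a * d - b * c) = 0 := by rw [this, e1, e2]; ring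
    exact (mul_eq_zero.mp h3).resolve_right hdet
  · have : b' * (a * d - b * c) = a * (a' * b + b' * d) - b * (a' * a + b' * c) := by ring
    have h3 : b' * (a * d - b * c) = 0 := by rw [this, e1, e2]; ring
    exact (mul_eq_zero.mp h3).resolve_right hdet

lemma span_pair_eq_of_det {x y : V}
    (hind : ∀ a b : ℚ_[p], a • x + b • y = 0 → a = 0 ∧ b = 0)
    {a b c d : ℚ_[p]} (ha : ‖a‖ ≤ 1) (hb : ‖b‖ ≤ 1) (hc : ‖c‖ ≤ 1) (hd : ‖d‖ ≤ 1)
    (hdet : ‖a * d - b * c‖ = 1) :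
    span ℤ_[p] ({a • x + b • y, c • x + d • y} : Set V) = span ℤ_[p] ({x, y} : Set V) := by
  have hdet0 : a * d - b * c ≠ 0 := by
    intro h; rw [h] at hdet; simp at hdet
  have hind' := pair_ind_transform hind hdet0
  apply le_antisymm
  · rw [span_le]
    rintro w hw
    rcases hw with rfl | h
    · exact (mem_span_pair_norm hind a b).mpr ⟨ha, hb⟩
    · rw [Set.mem_singleton_iff] at h
      rw [h]
      exact (mem_span_pair_norm hind c d).mpr ⟨hc, hd⟩
  · rw [span_le]
    have hx : x = (d / (a*d - b*c)) • (a • x + b • y)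
        + (-b / (a*d - b*c)) • (c • x + d • y) := by
      rw [smul_add, smul_add, smul_smul, smul_smul, smul_smul, smul_smul]
      have e1 : d / (a*d-b*c) * a + -b / (a*d-b*c) * c = 1 := by
          rw [div_mul_eq_mul_div, div_mul_eq_mul_div, ← add_div, div_eq_one_iff_eq hdet0]; ring
      have e2 : d / (a*d-b*c) * b + -b / (a*d-b*c) * d = 0 := by field_simp <;> ring <;> ring
      calc x = (d / (a*d-b*c) * a + -b / (a*d-b*c) * c) • x
          + (d / (a*d-b*c) * b + -b / (a*d-b*c) * d) • y := by rw [e1, e2]; simp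
      _ = _ := by rw [add_smul, add_smul]; abel
    have hy : y = (-c / (a*d - b*c)) • (a • x + b • y)
        + (a / (a*d - b*c)) • (c • x + d • y) := by
      rw [smul_add, smul_add, smul_smul, smul_smul, smul_smul, smul_smul]
      have e1 : -c / (a*d-b*c) * a + a / (a*d-b*c) * c = 0 := by field_simp <;> ring <;> ring
      have e2 : -c / (a*d-b*c) * b + a / (a*d-b*c) * d = 1 := by
          rw [div_mul_eq_mul_div, div_mul_eq_mul_div, ← add_div, div_eq_one_iff_eq hdet0]; ring
      calc y = (-c / (a*d-b*c) * a + a / (a*d-b*c) * c) • x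
          + (-c / (a*d-b*c) * b + a / (a*d-b*c) * d) • y := by rw [e1, e2]; simp
      _ = _ := by rw [add_smul, add_smul]; abel
    rintro w hw
    rcases hw with rfl | h
    · exact (mem_span_pair_norm' hind' _ _ hx).mpr
        ⟨by rw [norm_div, hdet, div_one]; exact hd,
         by rw [norm_div, hdet, div_one, norm_neg]; exact hb⟩
    · rw [Set.mem_singleton_iff] at h
      rw [h]
      exact (mem_span_pair_norm' hind' _ _ hy).mpr
        ⟨by rw [norm_div, hdet, div_one, norm_neg]; exact hc,
         by rw [norm_div, hdet, div_one]; exact ha⟩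

section Core
variable {V : Type*} [CommRing V] [Algebra ℚ_[p] V] [Algebra ℤ_[p] V]
  [IsScalarTower ℤ_[p] ℚ_[p] V]

omit [Algebra ℤ_[p] V] [IsScalarTower ℤ_[p] ℚ_[p] V] in
lemma mul_pair {w : V} {c d : ℚ_[p]} (hw : w * w = c • 1 + d • w) (a b a' b' : ℚ_[p]) :
    (a • (1:V) + b • w) * (a' • 1 + b' • w)
      = (a * a' + c * (b * b')) • (1:V) + (a * b' + a' * b + d * (b * b')) • w := by
  have h1 : (a • (1:V) + b • w) * (a' • 1 + b' • w)
      = (a*a') • ((1:V)*1) + (a*b') • ((1:V)*w) + (b*a') • (w*1) + (b*b') • (w*w) := by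
    rw [add_mul, mul_add, mul_add, smul_mul_smul_comm, smul_mul_smul_comm,
      smul_mul_smul_comm, smul_mul_smul_comm]
    abel
  rw [h1]
  simp only [one_mul, mul_one]
  rw [hw, smul_add, smul_smul, smul_smul]
  module

omit [Algebra ℤ_[p] V] [IsScalarTower ℤ_[p] ℚ_[p] V] in
lemma isUnit_of_nm_ne {w : V} {c d : ℚ_[p]} (hw : w * w = c • 1 + d • w)
    (u v : ℚ_[p]) (h : u^2 + d*u*v - c*v^2 ≠ 0) : IsUnit (u • (1:V) + v • w) := by
  apply IsUnit.of_mul_eq_one ((u^2 + d*u*v - c*v^2)⁻¹ • ((u + d*v) • (1:V) + (-v) • w))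
  rw [mul_smul_comm, mul_pair hw]
  have e1 : u * (u + d*v) + c * (v * -v) = u^2 + d*u*v - c*v^2 := by ring
  have e2 : u * -v + (u + d*v) * v + d * (v * -v) = 0 := by ring
  rw [e1, e2, zero_smul, add_zero, smul_smul, inv_mul_cancel₀ h, one_smul]

/-- The core local statement, after normalizing so that `γ'` is a unit. -/
theorem core2 (γ' δ' ϖ : V) (hunit : IsUnit γ')
    (hind : ∀ a b : ℚ_[p], a • γ' + b • δ' = 0 → a = 0 ∧ b = 0)
    (hspan : ∀ x : V, ∃ a b : ℚ_[p], x = a • γ' + b • δ')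
    (hmodγ : ϖ * γ' ∈ span ℤ_[p] ({γ', δ'} : Set V))
    (hmodδ : ϖ * δ' ∈ span ℤ_[p] ({γ', δ'} : Set V))
    (hO : ∀ x : V, x * γ' ∈ span ℤ_[p] ({γ', δ'} : Set V) →
      x * δ' ∈ span ℤ_[p] ({γ', δ'} : Set V) → x ∈ span ℤ_[p] ({(1:V), ϖ} : Set V)) :
    ∃ a : Vˣ, span ℤ_[p] ({γ', δ'} : Set V)
      = Submodule.map (LinearMap.mulLeft ℤ_[p] (a : V)) (span ℤ_[p] ({(1:V), ϖ} : Set V)) := by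
  classical
  set M : Submodule ℤ_[p] V := span ℤ_[p] ({γ', δ'} : Set V) with hM
  set N : Submodule ℤ_[p] V := span ℤ_[p] ({(1:V), ϖ} : Set V) with hN
  obtain ⟨u, hu⟩ := hunit
  have hinv : ∀ w : V, (↑u⁻¹ : V) * (γ' * w) = w := by
    intro w
    rw [← hu, ← mul_assoc, Units.inv_mul, one_mul]
  set τ : V := (↑u⁻¹ : V) * δ' with hτ
  have hγτ : γ' * τ = δ' := by
    rw [hτ, ← mul_assoc, ← hu, Units.mul_inv, one_mul]
  have hγ1 : γ' * 1 = γ' := mul_one _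
  set M' : Submodule ℤ_[p] V := span ℤ_[p] ({(1:V), τ} : Set V) with hM'
  have hτspan : ∀ x : V, ∃ a b : ℚ_[p], x = a • (1:V) + b • τ := by
    intro x
    obtain ⟨a, b, hab⟩ := hspan (γ' * x)
    refine ⟨a, b, ?_⟩
    have := congrArg (fun z => (↑u⁻¹ : V) * z) hab
    simp only [hinv] at this
    rw [this, mul_add, mul_smul_comm, mul_smul_comm, ← hτ]
    congr 1
    rw [← hu, Units.inv_mul]
  have hτind : ∀ a b : ℚ_[p], a • (1:V) + b • τ = 0 → a = 0 ∧ b = 0 := by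
    intro a b h
    apply hind
    have := congrArg (fun z => γ' * z) h
    simpa only [mul_add, mul_smul_comm, mul_one, hγτ, mul_zero] using this
  have hMmap : Submodule.map (LinearMap.mulLeft ℤ_[p] γ') M' = M := by
    rw [hM', Submodule.map_span, Set.image_pair]
    simp only [LinearMap.mulLeft_apply, hγ1, hγτ]
    exact hM.symm
  have hmemM' : ∀ x : V, γ' * x ∈ M ↔ x ∈ M' := by
    intro x
    constructor
    · intro h
      rw [← hMmap] at h
      obtain ⟨y, hy, hyx⟩ := Submodule.mem_map.mp h
      simp only [LinearMap.mulLeft_apply] at hyx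
      have : y = x := by
        have := congrArg (fun z => (↑u⁻¹ : V) * z) hyx
        simpa only [hinv] using this
      rwa [← this]
    · intro h
      rw [← hMmap]
      exact Submodule.mem_map.mpr ⟨x, h, by simp [LinearMap.mulLeft_apply]⟩
  obtain ⟨s, t, hst⟩ := hτspan (τ * τ)
  -- N = O = {x | x ∈ M' ∧ x * τ ∈ M'}
  have hone_mem : (1:V) ∈ M' := subset_span (by simp)
  have hτ_mem : τ ∈ M' := subset_span (by simp)
  have hϖ_mem : ϖ ∈ M' := (hmemM' ϖ).mp (by rw [mul_comm]; exact hmodγ)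
  have hϖτ_mem : ϖ * τ ∈ M' := by
    rw [← hmemM']
    have : γ' * (ϖ * τ) = ϖ * δ' := by rw [← hγτ]; ring
    rw [this]; exact hmodδ
  have hNO : ∀ x : V, x ∈ N ↔ (x ∈ M' ∧ x * τ ∈ M') := by
    intro x
    constructor
    · intro hx
      obtain ⟨a, b, hab⟩ := Submodule.mem_span_pair.mp hx
      subst hab
      constructor
      · exact add_mem (Submodule.smul_mem _ _ hone_mem) (Submodule.smul_mem _ _ hϖ_mem)
      · rw [add_mul, smul_mul_assoc, smul_mul_assoc, one_mul]
        exact add_mem (Submodule.smul_mem _ _ hτ_mem) (Submodule.smul_mem _ _ hϖτ_mem)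
    · rintro ⟨h1, h2⟩
      apply hO
      · rw [mul_comm]; exact (hmemM' x).mpr h1
      · rw [← hγτ, ← mul_assoc, mul_comm x γ', mul_assoc]
        exact (hmemM' _).mpr h2
  have hxττ : ∀ a b : ℚ_[p], (a • (1:V) + b • τ) * τ = (b*s) • (1:V) + (a + b*t) • τ := by
    intro a b
    rw [add_mul, smul_mul_assoc, smul_mul_assoc, one_mul, hst, smul_add, smul_smul, smul_smul]
    module
  have hN_iff : ∀ a b : ℚ_[p], (a • (1:V) + b • τ ∈ N)
      ↔ (‖a‖ ≤ 1 ∧ ‖b‖ ≤ 1 ∧ ‖b*s‖ ≤ 1 ∧ ‖b*t‖ ≤ 1) := by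
    intro a b
    rw [hNO, hxττ, mem_span_pair_norm hτind, mem_span_pair_norm hτind]
    constructor
    · rintro ⟨⟨h1, h2⟩, h3, h4⟩
      refine ⟨h1, h2, h3, ?_⟩
      have : b * t = (a + b*t) + (-a) := by ring
      rw [this]
      refine le_trans (Padic.nonarchimedean _ _) (max_le h4 (by rwa [norm_neg]))
    · rintro ⟨h1, h2, h3, h4⟩
      refine ⟨⟨h1, h2⟩, h3, ?_⟩
      exact le_trans (Padic.nonarchimedean _ _) (max_le h1 h4)
  have hmap_pair : ∀ (g : V) (x y : V),
      Submodule.map (LinearMap.mulLeft ℤ_[p] g) (span ℤ_[p] ({x, y} : Set V))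
        = span ℤ_[p] ({g * x, g * y} : Set V) := by
    intro g x y
    rw [Submodule.map_span, Set.image_pair]
    rfl
  by_cases hcase : ‖s‖ ≤ 1 ∧ ‖t‖ ≤ 1
  · -- N = M'
    have hNM' : N = M' := by
      apply le_antisymm
      · intro x hx
        obtain ⟨a, b, hab⟩ := hτspan x
        rw [hab] at hx ⊢
        obtain ⟨h1, h2, h3, h4⟩ := (hN_iff a b).mp hx
        exact (mem_span_pair_norm hτind a b).mpr ⟨h1, h2⟩
      · rw [hM', span_le]
        rintro w hw
        rcases hw with rfl | hw
        · have : (1:V) = (1:ℚ_[p]) • (1:V) + (0:ℚ_[p]) • τ := by simp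
          rw [this]
          refine (hN_iff 1 0).mpr ⟨by simp, by simp, by simp, by simp⟩
        · rw [Set.mem_singleton_iff] at hw
          rw [hw]
          have : τ = (0:ℚ_[p]) • (1:V) + (1:ℚ_[p]) • τ := by simp
          rw [this]
          exact (hN_iff 0 1).mpr ⟨by simp, by simp,
            by simpa using hcase.1, by simpa using hcase.2⟩
    refine ⟨u, ?_⟩
    rw [hu, hNM', hMmap]
  · -- max norm > 1
    push_neg at hcase
    set w : ℝ := max ‖s‖ ‖t‖ with hw
    have hw1 : 1 < w := by
      rcases le_or_gt ‖s‖ 1 with h | h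
      · exact lt_max_of_lt_right (hcase h)
      · exact lt_max_of_lt_left h
    -- get the p-power
    have hptop : (1:ℝ) < (p:ℝ) := by
      exact_mod_cast (Fact.out : p.Prime).one_lt
    have hz : ∃ z : ℚ_[p], ‖z‖ = w := by
      rcases max_choice ‖s‖ ‖t‖ with h | h
      · exact ⟨s, h.symm⟩
      · exact ⟨t, h.symm⟩
    obtain ⟨z, hzw⟩ := hz
    have hz0 : z ≠ 0 := by
      intro h
      rw [h, norm_zero] at hzw
      linarith
    have hval : ‖z‖ = (p:ℝ) ^ (-z.valuation) := Padic.norm_eq_zpow_neg_valuation hz0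
    have hvalpos : 0 < -z.valuation := by
      by_contra h
      push_neg at h
      have : (p:ℝ) ^ (-z.valuation) ≤ 1 := zpow_le_one_of_nonpos₀ (le_of_lt hptop) h
      rw [← hval, hzw] at this
      linarith
    set k : ℕ := (-z.valuation).toNat with hk
    have hkz : (k : ℤ) = -z.valuation := Int.toNat_of_nonneg (le_of_lt hvalpos)
    set πk : ℚ_[p] := (p : ℚ_[p]) ^ k with hπk
    have hπknorm : ‖πk‖ = w⁻¹ := by
      have h1 : ‖πk‖ = ((p:ℝ) ^ (k:ℤ))⁻¹ := by
        rw [hπk, norm_pow, Padic.norm_p, inv_pow, zpow_natCast]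
      rw [h1, ← hzw, hval, ← hkz]
    have hπk0 : πk ≠ 0 := by
      apply pow_ne_zero
      exact_mod_cast (Fact.out : p.Prime).ne_zero
    have hwpos : (0:ℝ) < w := lt_trans one_pos hw1
    have hπkle : ‖πk‖ ≤ 1 := by
      rw [hπknorm]
      rw [inv_le_one_iff₀]
      right; linarith
    have hπks : ‖πk * s‖ ≤ 1 := by
      rw [norm_mul, hπknorm]
      calc w⁻¹ * ‖s‖ ≤ w⁻¹ * w := by
            apply mul_le_mul_of_nonneg_left (le_max_left _ _) (le_of_lt (inv_pos.mpr hwpos))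
      _ = 1 := inv_mul_cancel₀ (ne_of_gt hwpos)
    have hπkt : ‖πk * t‖ ≤ 1 := by
      rw [norm_mul, hπknorm]
      calc w⁻¹ * ‖t‖ ≤ w⁻¹ * w := by
            apply mul_le_mul_of_nonneg_left (le_max_right _ _) (le_of_lt (inv_pos.mpr hwpos))
      _ = 1 := inv_mul_cancel₀ (ne_of_gt hwpos)
    have hρind : ∀ a b : ℚ_[p], a • (1:V) + b • (πk • τ) = 0 → a = 0 ∧ b = 0 := by
      intro a b h
      rw [smul_smul] at h
      obtain ⟨h1, h2⟩ := hτind _ _ h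
      exact ⟨h1, by
        rcases mul_eq_zero.mp h2 with h | h
        · exact h
        · exact absurd h hπk0⟩
    -- N = span {1, πk • τ}
    have hNspan : N = span ℤ_[p] ({(1:V), πk • τ} : Set V) := by
      apply le_antisymm
      · intro x hx
        obtain ⟨a, b, hab⟩ := hτspan x
        rw [hab] at hx ⊢
        obtain ⟨h1, h2, h3, h4⟩ := (hN_iff a b).mp hx
        have hbw : ‖b‖ * w ≤ 1 := by
          rcases max_choice ‖s‖ ‖t‖ with h | h
          · calc ‖b‖ * w = ‖b * s‖ := by rw [hw, h, norm_mul]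
            _ ≤ 1 := h3
          · calc ‖b‖ * w = ‖b * t‖ := by rw [hw, h, norm_mul]
            _ ≤ 1 := h4
        have hb' : ‖b / πk‖ ≤ 1 := by
          rw [div_eq_mul_inv, norm_mul, norm_inv, hπknorm, inv_inv]
          exact hbw
        have : b • τ = (b / πk) • (πk • τ) := by
          rw [smul_smul, div_mul_cancel₀ _ hπk0]
        rw [this]
        exact (mem_span_pair_norm hρind a (b / πk)).mpr ⟨h1, hb'⟩
      · rw [span_le]
        rintro x hx
        rcases hx with rfl | hx
        · have : (1:V) = (1:ℚ_[p]) • (1:V) + (0:ℚ_[p]) • τ := by simp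
          rw [this]
          exact (hN_iff 1 0).mpr ⟨by simp, by simp, by simp, by simp⟩
        · rw [Set.mem_singleton_iff] at hx
          rw [hx]
          have : πk • τ = (0:ℚ_[p]) • (1:V) + πk • τ := by simp
          rw [this]
          exact (hN_iff 0 πk).mpr ⟨by simp, hπkle, hπks, hπkt⟩
    -- choose e
    set e : ℚ_[p] := if ‖s‖ = w then 0 else 1 with he
    have hele : ‖e‖ ≤ 1 := by
      rw [he]; split <;> simp
    have hE : ‖e^2 + e*t - s‖ = w := by
      rw [he]
      split
      · next h => rw [← h]; simpa using (by simpa : ‖(0:ℚ_[p])^2 + 0*t - s‖ = ‖s‖)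
      · next h =>
        have hsw : ‖s‖ < w := lt_of_le_of_ne (le_max_left _ _) h
        have htw : ‖t‖ = w := by
          rcases max_choice ‖s‖ ‖t‖ with h' | h'
          · exact absurd h'.symm h
          · exact h'.symm
        have h1 : (1:ℚ_[p])^2 + 1*t - s = t + (1 - s) := by ring
        rw [h1]
        have hne : ‖(1:ℚ_[p]) - s‖ < ‖t‖ := by
          rw [htw]
          have hh : ‖(1:ℚ_[p]) - s‖ ≤ max ‖(1:ℚ_[p])‖ ‖-s‖ := by
            rw [sub_eq_add_neg]; exact Padic.nonarchimedean _ _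
          rw [norm_one, norm_neg] at hh
          exact lt_of_le_of_lt hh (max_lt hw1 hsw)
        rw [Padic.add_eq_max_of_ne (by rw [htw]; exact ne_of_gt (htw ▸ hne))]
        rw [max_eq_left (le_of_lt hne), htw]
    have hE0 : e^2 + e*t - s ≠ 0 := by
      intro h
      rw [h, norm_zero] at hE
      linarith
    set x₀ : V := e • (1:V) + τ with hx₀
    have hx₀' : x₀ = e • (1:V) + (1:ℚ_[p]) • τ := by rw [hx₀, one_smul]
    -- x₀ is a unit
    have hx₀unit : IsUnit x₀ := by
      rw [hx₀']
      apply isUnit_of_nm_ne hst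
      intro h
      apply hE0
      have h2 : e^2 + e*t - s = e ^ 2 + t * e * 1 - s * 1 ^ 2 := by ring
      rw [h2, h]
    -- map (mulLeft x₀) N = M'
    have hx₀τ : x₀ * τ = s • (1:V) + (e + t) • τ := by
      rw [hx₀, add_mul, smul_mul_assoc, one_mul, hst]
      module
    have hmapx₀ : Submodule.map (LinearMap.mulLeft ℤ_[p] x₀) N = M' := by
      rw [hNspan, hmap_pair]
      have e1 : x₀ * 1 = e • (1:V) + (1:ℚ_[p]) • τ := by rw [mul_one, hx₀, one_smul]
      have e2 : x₀ * (πk • τ) = (πk * s) • (1:V) + (πk * (e + t)) • τ := by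
        rw [mul_smul_comm, hx₀τ, smul_add, smul_smul, smul_smul]
      rw [e1, e2, hM']
      apply span_pair_eq_of_det hτind hele (by simp) hπks
      · rw [norm_mul, hπknorm]
        have : ‖e + t‖ ≤ w := by
          refine le_trans (Padic.nonarchimedean _ _) (max_le ?_ (le_max_right _ _))
          exact le_trans hele (le_of_lt hw1)
        calc w⁻¹ * ‖e + t‖ ≤ w⁻¹ * w :=
              mul_le_mul_of_nonneg_left this (le_of_lt (inv_pos.mpr hwpos))
        _ = 1 := inv_mul_cancel₀ (ne_of_gt hwpos)
      · have : e * (πk * (e + t)) - 1 * (πk * s) = πk * (e^2 + e*t - s) := by ring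
        rw [this, norm_mul, hπknorm, hE]
        exact inv_mul_cancel₀ (ne_of_gt hwpos)
    -- conclude
    obtain ⟨u₀, hu₀⟩ := hx₀unit
    refine ⟨u * u₀, ?_⟩
    have : ((u * u₀ : Vˣ) : V) = γ' * x₀ := by rw [Units.val_mul, hu, hu₀]
    rw [this, LinearMap.mulLeft_mul, Submodule.map_comp, hmapx₀, hMmap]

lemma span_pair_add (x y : V) :
    span ℤ_[p] ({x + y, y} : Set V) = span ℤ_[p] ({x, y} : Set V) := by
  apply le_antisymm
  · rw [span_le]
    rintro w hw
    rcases hw with rfl | hw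
    · exact Submodule.mem_span_pair.mpr ⟨1, 1, by simp⟩
    · rw [Set.mem_singleton_iff] at hw
      rw [hw]
      exact subset_span (by simp)
  · rw [span_le]
    rintro w hw
    rcases hw with rfl | hw
    · exact Submodule.mem_span_pair.mpr ⟨1, -1, by simp⟩
    · rw [Set.mem_singleton_iff] at hw
      rw [hw]
      exact subset_span (by simp)

/-- The core local statement. -/
theorem core (γ δ ϖ : V)
    (hind : ∀ a b : ℚ_[p], a • γ + b • δ = 0 → a = 0 ∧ b = 0)
    (hspan : ∀ x : V, ∃ a b : ℚ_[p], x = a • γ + b • δ)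
    (hϖind : ∀ a b : ℚ_[p], a • (1:V) + b • ϖ = 0 → a = 0 ∧ b = 0)
    (hϖspan : ∀ x : V, ∃ a b : ℚ_[p], x = a • (1:V) + b • ϖ)
    (hmodγ : ϖ * γ ∈ span ℤ_[p] ({γ, δ} : Set V))
    (hmodδ : ϖ * δ ∈ span ℤ_[p] ({γ, δ} : Set V))
    (hO : ∀ x : V, x * γ ∈ span ℤ_[p] ({γ, δ} : Set V) →
      x * δ ∈ span ℤ_[p] ({γ, δ} : Set V) → x ∈ span ℤ_[p] ({(1:V), ϖ} : Set V)) :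
    ∃ a : Vˣ, span ℤ_[p] ({γ, δ} : Set V)
      = Submodule.map (LinearMap.mulLeft ℤ_[p] (a : V)) (span ℤ_[p] ({(1:V), ϖ} : Set V)) := by
  obtain ⟨c, d, hcd⟩ := hϖspan (ϖ * ϖ)
  obtain ⟨g0, g1, hγ⟩ := hϖspan γ
  obtain ⟨d0, d1, hδ⟩ := hϖspan δ
  have hσ : γ + δ = (g0 + d0) • (1:V) + (g1 + d1) • ϖ := by
    rw [hγ, hδ, add_smul, add_smul]; abel
  -- not all three norms vanish
  have hQ : ¬(g0^2 + d*g0*g1 - c*g1^2 = 0 ∧ d0^2 + d*d0*d1 - c*d1^2 = 0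
      ∧ (g0+d0)^2 + d*(g0+d0)*(g1+d1) - c*(g1+d1)^2 = 0) := by
    rintro ⟨h1, h2, h3⟩
    obtain ⟨a, b, hab⟩ := hspan 1
    rw [hγ, hδ] at hab
    have hco : (a*g0 + b*d0 - 1) • (1:V) + (a*g1 + b*d1) • ϖ = 0 := by
      have h2 : (a*g0 + b*d0 - 1) • (1:V) + (a*g1 + b*d1) • ϖ
          = (a • (g0 • (1:V) + g1 • ϖ) + b • (d0 • (1:V) + d1 • ϖ)) - (1:V) := by module
      rw [h2, ← hab, sub_self]
    obtain ⟨e1', e2⟩ := hϖind _ _ hco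
    have e1 : a*g0 + b*d0 = 1 := sub_eq_zero.mp e1'
    have : (1:ℚ_[p]) = 0 := by
      linear_combination (a^2 - a*b) * h1 + (b^2 - a*b) * h2 + (a*b) * h3
        - (a*g0 + b*d0 + 1) * e1
        + (c*(a*g1 + b*d1) - d*(a*g0 + b*d0)) * e2
    norm_num at this
  by_cases hQγ : g0^2 + d*g0*g1 - c*g1^2 ≠ 0
  · exact core2 γ δ ϖ (hγ ▸ isUnit_of_nm_ne hcd g0 g1 hQγ) hind hspan hmodγ hmodδ hO
  · push_neg at hQγ
    by_cases hQδ : d0^2 + d*d0*d1 - c*d1^2 ≠ 0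
    · have hpair : ({δ, γ} : Set V) = {γ, δ} := Set.pair_comm δ γ
      have := core2 δ γ ϖ (hδ ▸ isUnit_of_nm_ne hcd d0 d1 hQδ)
        (fun a b h => (hind b a (by rw [← h]; abel)).symm)
        (fun x => by obtain ⟨a, b, h⟩ := hspan x; exact ⟨b, a, by rw [h]; abel⟩)
        (by rw [hpair]; exact hmodδ) (by rw [hpair]; exact hmodγ)
        (fun x h1 h2 => hO x (by rw [← hpair]; exact h2) (by rw [← hpair]; exact h1))
      rwa [hpair] at this
    · push_neg at hQδ
      have hQσ : (g0+d0)^2 + d*(g0+d0)*(g1+d1) - c*(g1+d1)^2 ≠ 0 := by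
        intro h
        exact hQ ⟨hQγ, hQδ, h⟩
      have hpair : span ℤ_[p] ({γ + δ, δ} : Set V) = span ℤ_[p] ({γ, δ} : Set V) :=
        span_pair_add γ δ
      have hind' : ∀ a b : ℚ_[p], a • (γ + δ) + b • δ = 0 → a = 0 ∧ b = 0 := by
        intro a b h
        have h3 : a • γ + (a + b) • δ = a • (γ + δ) + b • δ := by module
        obtain ⟨ha, hab⟩ := hind _ _ (by rw [h3, h])
        exact ⟨ha, by rw [ha, zero_add] at hab; exact hab⟩
      have hspan' : ∀ x : V, ∃ a b : ℚ_[p], x = a • (γ + δ) + b • δ := by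
        intro x
        obtain ⟨a, b, h⟩ := hspan x
        exact ⟨a, b - a, by rw [h]; module⟩
      have hmod1 : ϖ * (γ + δ) ∈ span ℤ_[p] ({γ + δ, δ} : Set V) := by
        rw [hpair, mul_add]
        exact add_mem hmodγ hmodδ
      have hmod2 : ϖ * δ ∈ span ℤ_[p] ({γ + δ, δ} : Set V) := by
        rw [hpair]; exact hmodδ
      have hO' : ∀ x : V, x * (γ + δ) ∈ span ℤ_[p] ({γ + δ, δ} : Set V) →
          x * δ ∈ span ℤ_[p] ({γ + δ, δ} : Set V) → x ∈ span ℤ_[p] ({(1:V), ϖ} : Set V) := by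
        intro x h1 h2
        rw [hpair] at h1 h2
        refine hO x ?_ h2
        have h3 : x * γ = x * (γ + δ) - x * δ := by ring
        rw [h3]
        exact sub_mem h1 h2
      obtain ⟨a, ha⟩ := core2 (γ + δ) δ ϖ (hσ ▸ isUnit_of_nm_ne hcd _ _ hQσ)
        hind' hspan' hmod1 hmod2 hO'
      exact ⟨a, by rw [← hpair, ha]⟩

end Core

section Transfer
variable {p : ℕ} [Fact p.Prime] {K : Type*} [Field K] [Algebra ℚ K]

lemma qp_smul_tmul (c : ℚ_[p]) (k : K) (a : ℚ_[p]) :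
    c • (k ⊗ₜ[ℚ] a) = k ⊗ₜ[ℚ] (c * a) := by
  rw [Algebra.smul_def]
  change ((1 : K) ⊗ₜ[ℚ] c) * (k ⊗ₜ[ℚ] a) = _
  rw [Algebra.TensorProduct.tmul_mul_tmul, one_mul]

lemma rat_smul (q : ℚ) (w : K ⊗[ℚ] ℚ_[p]) : q • w = ((q : ℚ_[p])) • w := by
  induction w using TensorProduct.induction_on with
  | zero => simp
  | tmul k a =>
      rw [TensorProduct.smul_tmul' q k a, TensorProduct.smul_tmul, qp_smul_tmul, Rat.smul_def]
  | add x y hx hy => rw [smul_add, smul_add, hx, hy]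

lemma range_pair (x y : K) : Set.range ![x, y] = {x, y} := by
  ext z
  simp [Fin.exists_fin_two]
  tauto

lemma pair_transfer (x y : K) (hLI : LinearIndependent ℚ ![x, y])
    (hsp : ∀ k : K, ∃ a b : ℚ, k = a • x + b • y) :
    (∀ a b : ℚ_[p], a • (x ⊗ₜ[ℚ] (1:ℚ_[p])) + b • (y ⊗ₜ[ℚ] (1:ℚ_[p])) = 0 → a = 0 ∧ b = 0)
    ∧ (∀ w : K ⊗[ℚ] ℚ_[p], ∃ a b : ℚ_[p],
        w = a • (x ⊗ₜ[ℚ] (1:ℚ_[p])) + b • (y ⊗ₜ[ℚ] (1:ℚ_[p]))) := by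
  have hspan_top : ⊤ ≤ Submodule.span ℚ (Set.range ![x, y]) := by
    intro k _
    rw [range_pair]
    obtain ⟨a, b, hab⟩ := hsp k
    exact Submodule.mem_span_pair.mpr ⟨a, b, hab.symm⟩
  let bxy : Module.Basis (Fin 2) ℚ K := Module.Basis.mk hLI hspan_top
  have hbxy0 : bxy 0 = x := by simp [bxy]
  have hbxy1 : bxy 1 = y := by simp [bxy]
  let bc : Module.Basis (Fin 2) ℚ_[p] (ℚ_[p] ⊗[ℚ] K) := bxy.baseChange ℚ_[p]
  constructor
  · intro a b h
    have h1 : x ⊗ₜ[ℚ] a + y ⊗ₜ[ℚ] b = 0 := by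
      rw [qp_smul_tmul, qp_smul_tmul, mul_one, mul_one] at h
      exact h
    have h2 := congrArg (Algebra.TensorProduct.comm ℚ K ℚ_[p]) h1
    rw [map_add, map_zero, Algebra.TensorProduct.comm_tmul, Algebra.TensorProduct.comm_tmul] at h2
    have h3 : a • bc 0 + b • bc 1 = 0 := by
      rw [Module.Basis.baseChange_apply, Module.Basis.baseChange_apply, hbxy0, hbxy1,
        TensorProduct.smul_tmul', TensorProduct.smul_tmul', smul_eq_mul, smul_eq_mul,
        mul_one, mul_one]
      exact h2
    have hli := Fintype.linearIndependent_iff.mp bc.linearIndependent ![a, b]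
      (by rw [Fin.sum_univ_two]; exact h3)
    exact ⟨hli 0, hli 1⟩
  · intro w
    have hsp_top : w ∈ Submodule.span ℚ_[p]
        ({x ⊗ₜ[ℚ] (1:ℚ_[p]), y ⊗ₜ[ℚ] (1:ℚ_[p])} : Set (K ⊗[ℚ] ℚ_[p])) := by
      induction w using TensorProduct.induction_on with
      | zero => exact zero_mem _
      | tmul k q =>
          obtain ⟨a, b, hk⟩ := hsp k
          have hx1 : ((a:ℚ) • x) ⊗ₜ[ℚ] q = ((a:ℚ_[p]) * q) • (x ⊗ₜ[ℚ] (1:ℚ_[p])) := by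
            rw [← TensorProduct.smul_tmul', rat_smul, ← smul_smul]
            congr 1
            rw [qp_smul_tmul, mul_one]
          have hy1 : ((b:ℚ) • y) ⊗ₜ[ℚ] q = ((b:ℚ_[p]) * q) • (y ⊗ₜ[ℚ] (1:ℚ_[p])) := by
            rw [← TensorProduct.smul_tmul', rat_smul, ← smul_smul]
            congr 1
            rw [qp_smul_tmul, mul_one]
          have he : k ⊗ₜ[ℚ] q = ((a:ℚ_[p]) * q) • (x ⊗ₜ[ℚ] (1:ℚ_[p]))
              + ((b:ℚ_[p]) * q) • (y ⊗ₜ[ℚ] (1:ℚ_[p])) := by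
            rw [hk, TensorProduct.add_tmul, hx1, hy1]
          rw [he]
          exact Submodule.add_mem _
            (Submodule.smul_mem _ _ (Submodule.subset_span (by simp)))
            (Submodule.smul_mem _ _ (Submodule.subset_span (by simp)))
      | add w1 w2 h1 h2 => exact Submodule.add_mem _ h1 h2
    obtain ⟨a, b, hab⟩ := Submodule.mem_span_pair.mp hsp_top
    exact ⟨a, b, hab.symm⟩

end Transfer
end LocPrinc

set_option maxHeartbeats 3200000 in
set_option synthInstance.maxHeartbeats 80000 in
open LocPrinc in
/-- Every proper fractional ideal of a quadratic order is locally principal: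
if `A` is a fractional ideal (a full `ℤ`-lattice with `O_f·A ⊆ A`) of the order
`O_f = ℤ + ℤfω` of conductor `f` in a quadratic field `K` such that
`{α ∈ K : α·A ⊆ A} = O_f`, then for every prime `p` there is `a_p ∈ (K ⊗_ℚ ℚ_p)ˣ`
such that the image of `A ⊗_ℤ ℤ_p` in `K_p = K ⊗_ℚ ℚ_p` equals `a_p·(O_f ⊗_ℤ ℤ_p)`. -/
theorem proper_fractional_ideal_locally_principal
    (K : Type*) [Field K] [NumberField K] (hdeg : Module.finrank ℚ K = 2)
    (ω : K) (hω : ∀ x : K, IsIntegral ℤ x ↔ ∃ a b : ℤ, x = (a : K) + (b : K) * ω)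
    (f : ℕ) (hf : 0 < f)
    (A : Submodule ℤ K) (hfg : A.FG) (hfull : Submodule.span ℚ (A : Set K) = ⊤)
    (hideal : ∀ x ∈ {x : K | ∃ a b : ℤ, x = (a : K) + (b : K) * ((f : K) * ω)},
      ∀ y ∈ A, x * y ∈ A)
    (hproper : ∀ α : K, (∀ y ∈ A, α * y ∈ A) ↔
      ∃ a b : ℤ, α = (a : K) + (b : K) * ((f : K) * ω)) :
    ∀ (p : ℕ) [Fact p.Prime], ∃ ap : (K ⊗[ℚ] ℚ_[p])ˣ,
      Submodule.span ℤ_[p] ((fun x : K => x ⊗ₜ[ℚ] (1 : ℚ_[p])) '' (A : Set K))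
        = Submodule.map (LinearMap.mulLeft ℤ_[p] ((ap : K ⊗[ℚ] ℚ_[p])))
            (Submodule.span ℤ_[p] ((fun x : K => x ⊗ₜ[ℚ] (1 : ℚ_[p])) ''
              {x : K | ∃ a b : ℤ, x = (a : K) + (b : K) * ((f : K) * ω)})) := by
  classical
  set π : K := (f : K) * ω with hπdef
  -- (1, ω) spans K over ℚ
  have hsp1ω : ∀ x : K, ∃ a b : ℚ, x = a • (1:K) + b • ω := by
    intro x
    have halgQ : IsAlgebraic ℚ x := (Algebra.IsAlgebraic.isAlgebraic x)
    have halg : IsAlgebraic ℤ x := (IsFractionRing.isAlgebraic_iff ℤ ℚ K).mpr halgQ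
    obtain ⟨w, n, hn0, hw⟩ : ∃ w : integralClosure ℤ K, ∃ n : ℤ, n ≠ 0 ∧
        algebraMap ℤ K n * x = (w : K) := by
      obtain ⟨n, hn0, hint⟩ := halg.exists_integral_multiple
      exact ⟨⟨n • x, hint⟩, n, hn0, by simp [zsmul_eq_mul]⟩
    obtain ⟨a, b, hab⟩ := (hω (w : K)).mp w.2
    refine ⟨(a : ℚ) / (n : ℚ), (b : ℚ) / (n : ℚ), ?_⟩
    have hnQ : (n : ℚ) ≠ 0 := Int.cast_ne_zero.mpr hn0
    have hw' : ((n:ℤ):K) * x = (w:K) := by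
      rwa [show (algebraMap ℤ K) n = ((n:ℤ):K) from map_intCast (algebraMap ℤ K) n] at hw
    have hnx : (n : ℚ) • x = (a : ℚ) • (1:K) + (b : ℚ) • ω := by
      rw [Rat.smul_def, Rat.smul_def, Rat.smul_def]
      push_cast
      rw [hw', hab]
      ring
    have : x = ((n:ℚ)⁻¹ * (n:ℚ)) • x := by rw [inv_mul_cancel₀ hnQ, one_smul]
    rw [this, ← smul_smul, hnx, smul_add, smul_smul, smul_smul]
    rw [div_eq_inv_mul, div_eq_inv_mul]
  -- (1, π) spans K over ℚ
  have hππ : π = ((f:ℚ)) • ω := by rw [Rat.smul_def, hπdef]; push_cast; ring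
  have hfQ : (f : ℚ) ≠ 0 := Nat.cast_ne_zero.mpr hf.ne'
  have hsp1π : ∀ x : K, ∃ a b : ℚ, x = a • (1:K) + b • π := by
    intro x
    obtain ⟨a, b, hab⟩ := hsp1ω x
    refine ⟨a, b / (f:ℚ), ?_⟩
    rw [hab, hππ, smul_smul, div_mul_cancel₀ _ hfQ]
  have hLI1π : LinearIndependent ℚ ![(1:K), π] := by
    apply linearIndependent_of_top_le_span_of_card_eq_finrank
    · rw [range_pair]
      intro x _
      obtain ⟨a, b, hab⟩ := hsp1π x
      exact Submodule.mem_span_pair.mpr ⟨a, b, hab.symm⟩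
    · simp [hdeg]
  have ind1π : ∀ a b : ℚ, a • (1:K) + b • π = 0 → a = 0 ∧ b = 0 := by
    intro a b h
    have hli := Fintype.linearIndependent_iff.mp hLI1π ![a, b]
      (by rw [Fin.sum_univ_two]; exact h)
    exact ⟨hli 0, hli 1⟩
  -- basis of A
  have hAfin : Module.Finite ℤ A := Module.Finite.iff_fg.mpr hfg
  have hAfree : Module.Free ℤ A := Module.free_of_finite_type_torsion_free'
  set bA := Module.Free.chooseBasis ℤ A with hbA
  set v : Module.Free.ChooseBasisIndex ℤ A → K := fun i => ((bA i : A) : K) with hv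
  have hvA : Submodule.span ℤ (Set.range v) = A := by
    have h1 : Set.range v = A.subtype '' (Set.range bA) := by
      ext z; constructor
      · rintro ⟨i, rfl⟩; exact ⟨bA i, ⟨i, rfl⟩, rfl⟩
      · rintro ⟨w, ⟨i, rfl⟩, rfl⟩; exact ⟨i, rfl⟩
    rw [h1, ← Submodule.map_span, bA.span_eq, Submodule.map_top, Submodule.range_subtype]
  have hLIv : LinearIndependent ℚ v := by
    rw [← LinearIndependent.iff_fractionRing (R := ℤ) (K := ℚ)]
    exact bA.linearIndependent.map' A.subtype (Submodule.ker_subtype A)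
  have hspv : ⊤ ≤ Submodule.span ℚ (Set.range v) := by
    rw [← hfull, Submodule.span_le]
    intro x hx
    have hx' : x ∈ Submodule.span ℤ (Set.range v) := by rw [hvA]; exact hx
    exact Submodule.span_subset_span ℤ ℚ _ hx'
  set bv : Module.Basis (Module.Free.ChooseBasisIndex ℤ A) ℚ K := Module.Basis.mk hLIv hspv with hbv
  have hcard : Fintype.card (Module.Free.ChooseBasisIndex ℤ A) = 2 := by
    rw [← hdeg]
    exact (Module.finrank_eq_card_basis bv).symm
  set eqv := Fintype.equivFinOfCardEq hcard with heqv
  set α : K := v (eqv.symm 0) with hα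
  set β : K := v (eqv.symm 1) with hβ
  have hv'eq : v ∘ eqv.symm = ![α, β] := by
    funext i
    fin_cases i <;> simp [hα, hβ]
  have hrangev : Set.range v = {α, β} := by
    rw [← Function.Surjective.range_comp eqv.symm.surjective v, hv'eq, range_pair]
  have hLIαβ : LinearIndependent ℚ ![α, β] := by
    rw [← hv'eq]
    exact hLIv.comp eqv.symm eqv.symm.injective
  have hAspan : A = Submodule.span ℤ ({α, β} : Set K) := by rw [← hvA, hrangev]
  have hspαβ : ∀ x : K, ∃ a b : ℚ, x = a • α + b • β := by
    intro x
    have : x ∈ Submodule.span ℚ ({α, β} : Set K) := by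
      rw [← hrangev]
      exact hspv trivial
    obtain ⟨a, b, h⟩ := Submodule.mem_span_pair.mp this
    exact ⟨a, b, h.symm⟩
  have indαβ : ∀ a b : ℚ, a • α + b • β = 0 → a = 0 ∧ b = 0 := by
    intro a b h
    have hli := Fintype.linearIndependent_iff.mp hLIαβ ![a, b]
      (by rw [Fin.sum_univ_two]; exact h)
    exact ⟨hli 0, hli 1⟩
  have hα0 : α ≠ 0 := by
    intro h
    exact one_ne_zero (indαβ 1 0 (by rw [h]; simp)).1
  -- π acts on A
  have hπmem : π ∈ {x : K | ∃ a b : ℤ, x = (a : K) + (b : K) * ((f : K) * ω)} :=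
    ⟨0, 1, by push_cast; rw [hπdef]; ring⟩
  have hαA : α ∈ A := by
    rw [hα, hv]
    exact (bA (eqv.symm 0)).2
  have hβA : β ∈ A := by
    rw [hβ, hv]
    exact (bA (eqv.symm 1)).2
  obtain ⟨T11, T21, hT1⟩ := Submodule.mem_span_pair.mp
    (hAspan ▸ hideal π hπmem α hαA)
  obtain ⟨T12, T22, hT2⟩ := Submodule.mem_span_pair.mp
    (hAspan ▸ hideal π hπmem β hβA)
  rw [zsmul_eq_mul, zsmul_eq_mul] at hT1 hT2
  -- Bezout certificate for the multiplier transfer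
  obtain ⟨X, Y, Z, hXYZ⟩ : ∃ X Y Z : ℤ, X * T12 + Y * T21 + Z * (T11 - T22) = 1 := by
    set g : ℕ := Int.gcd ((Int.gcd T12 T21 : ℕ) : ℤ) (T11 - T22) with hg
    have hg1 : ((g:ℕ):ℤ) = 1 := by
      rcases Nat.eq_zero_or_pos g with hg0 | hgpos
      · exfalso
        rw [hg] at hg0
        obtain ⟨hgin, hgd⟩ := Int.gcd_eq_zero_iff.mp hg0
        have hgin' : Int.gcd T12 T21 = 0 := by exact_mod_cast hgin
        obtain ⟨h12, h21⟩ := Int.gcd_eq_zero_iff.mp hgin'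
        -- multiplication by π is scalar, contradiction with irrationality of π
        have hπα : π * α = (T11:K) * α := by rw [← hT1, h21]; push_cast; ring
        have : (π - (T11:K)) * α = 0 := by rw [sub_mul, hπα, sub_self]
        have hπT : π = (T11:K) := by
          rcases mul_eq_zero.mp this with h | h
          · exact sub_eq_zero.mp h
          · exact absurd h hα0
        have hzero : ((T11:ℚ)) • (1:K) + (-1 : ℚ) • π = 0 := by
          rw [Rat.smul_def, Rat.smul_def, hπT]
          push_cast
          ring
        exact one_ne_zero (neg_eq_zero.mp (ind1π _ _ hzero).2)
      · -- the proper multiplier argument forces g = 1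
        have hgZ0 : ((g:ℕ):ℤ) ≠ 0 := by exact_mod_cast hgpos.ne'
        have hgK : ((g:ℕ):K) ≠ 0 := Nat.cast_ne_zero.mpr hgpos.ne'
        have hgQ : ((g:ℕ):ℚ) ≠ 0 := Nat.cast_ne_zero.mpr hgpos.ne'
        obtain ⟨c1, hc1⟩ : ((g:ℕ):ℤ) ∣ (T11 - T22) := hg ▸ Int.gcd_dvd_right ((Int.gcd T12 T21 : ℕ) : ℤ) (T11 - T22)
        have hdvdin : ((g:ℕ):ℤ) ∣ ((Int.gcd T12 T21 : ℕ) : ℤ) := hg ▸ Int.gcd_dvd_left ((Int.gcd T12 T21 : ℕ) : ℤ) (T11 - T22)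
        obtain ⟨c2, hc2⟩ : ((g:ℕ):ℤ) ∣ T21 := dvd_trans hdvdin (Int.gcd_dvd_right _ _)
        obtain ⟨c3, hc3⟩ : ((g:ℕ):ℤ) ∣ T12 := dvd_trans hdvdin (Int.gcd_dvd_left _ _)
        have hc1K : (T11:K) - (T22:K) = ((g:ℕ):K) * (c1:K) := by exact_mod_cast hc1
        have hc2K : (T21:K) = ((g:ℕ):K) * (c2:K) := by exact_mod_cast hc2
        have hc3K : (T12:K) = ((g:ℕ):K) * (c3:K) := by exact_mod_cast hc3
        set ξ : K := (((g:ℕ):K))⁻¹ * (π - (T22:K)) with hξdef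
        have key1 : (π - (T22:K)) * α = ((g:ℕ):K) * ((c1:K) * α + (c2:K) * β) := by
          linear_combination (-1 : K) * hT1 + α * hc1K + β * hc2K
        have key2 : (π - (T22:K)) * β = ((g:ℕ):K) * ((c3:K) * α) := by
          linear_combination (-1 : K) * hT2 + α * hc3K
        have hξα : ξ * α = (c1:K) * α + (c2:K) * β := by
          rw [hξdef, mul_assoc, key1, ← mul_assoc, inv_mul_cancel₀ hgK, one_mul]
        have hξβ : ξ * β = (c3:K) * α := by
          rw [hξdef, mul_assoc, key2, ← mul_assoc, inv_mul_cancel₀ hgK, one_mul]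
        have hξA : ∀ y ∈ A, ξ * y ∈ A := by
          intro y hy
          rw [hAspan] at hy ⊢
          obtain ⟨m, n, hmn⟩ := Submodule.mem_span_pair.mp hy
          rw [← hmn, mul_add, mul_smul_comm, mul_smul_comm, hξα, hξβ]
          refine add_mem (Submodule.smul_mem _ _ ?_) (Submodule.smul_mem _ _ ?_)
          · exact Submodule.mem_span_pair.mpr ⟨c1, c2, by rw [zsmul_eq_mul, zsmul_eq_mul]⟩
          · exact Submodule.mem_span_pair.mpr ⟨c3, 0, by rw [zsmul_eq_mul]; simp⟩
        obtain ⟨a0, b0, hξab⟩ := (hproper ξ).mp hξA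
        have hcoord : ((a0:ℚ) + (T22:ℚ)/((g:ℕ):ℚ)) • (1:K) + ((b0:ℚ) - 1/((g:ℕ):ℚ)) • π = 0 := by
          rw [Rat.smul_def, Rat.smul_def]
          rw [hξdef] at hξab
          push_cast
          field_simp
          field_simp at hξab
          linear_combination (-1 : K) * hξab
        have hb0 : (b0:ℚ) - 1/((g:ℕ):ℚ) = 0 := (ind1π _ _ hcoord).2
        have hb0' : ((g:ℕ):ℚ) * (b0:ℚ) = 1 := by
          rw [sub_eq_zero.mp hb0, mul_one_div, div_self hgQ]
        have hgb : ((g:ℕ):ℤ) * b0 = 1 := by exact_mod_cast hb0'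
        rcases Int.isUnit_iff.mp (IsUnit.of_mul_eq_one _ hgb) with h | h
        · exact h
        · omega
    have e1 : ((Int.gcd T12 T21 : ℕ):ℤ) = T12 * Int.gcdA T12 T21 + T21 * Int.gcdB T12 T21 :=
      Int.gcd_eq_gcd_ab T12 T21
    have e2 : ((g:ℕ):ℤ) = ((Int.gcd T12 T21 : ℕ):ℤ) * Int.gcdA _ _
        + (T11 - T22) * Int.gcdB _ _ := Int.gcd_eq_gcd_ab _ _
    exact ⟨Int.gcdA T12 T21 * Int.gcdA ((Int.gcd T12 T21 : ℕ):ℤ) (T11 - T22),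
      Int.gcdB T12 T21 * Int.gcdA ((Int.gcd T12 T21 : ℕ):ℤ) (T11 - T22),
      Int.gcdB ((Int.gcd T12 T21 : ℕ):ℤ) (T11 - T22),
      by rw [← hg1, e2, e1]; ring⟩
  -- the p-adic part
  intro p hp
  obtain ⟨ind1V, sp1V⟩ := pair_transfer (p := p) (1:K) π hLI1π hsp1π
  obtain ⟨indαβV, spαβV⟩ := pair_transfer (p := p) α β hLIαβ hspαβ
  have h1V : (1:K) ⊗ₜ[ℚ] (1:ℚ_[p]) = (1 : K ⊗[ℚ] ℚ_[p]) := rfl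
  set γ : K ⊗[ℚ] ℚ_[p] := α ⊗ₜ[ℚ] (1:ℚ_[p]) with hγdef
  set δ : K ⊗[ℚ] ℚ_[p] := β ⊗ₜ[ℚ] (1:ℚ_[p]) with hδdef
  set ϖ : K ⊗[ℚ] ℚ_[p] := π ⊗ₜ[ℚ] (1:ℚ_[p]) with hϖdef
  have hcastK : ∀ (z : ℤ) (x : K), (z:K) * x = ((z:ℚ)) • x := by
    intro z x
    rw [Rat.smul_def]
    push_cast
    ring
  have hzmul : ∀ (z : ℤ) (w : K ⊗[ℚ] ℚ_[p]), ((z:ℚ_[p])) • w = ((z:ℤ_[p])) • w := by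
    intro z w
    rw [zsmul_eq, PadicInt.coe_intCast]
  have hcastV : ∀ (z : ℤ) (w : K ⊗[ℚ] ℚ_[p]), ((z:ℚ)) • w = ((z:ℚ_[p])) • w := by
    intro z w
    rw [rat_smul, show ((((z:ℤ):ℚ)):ℚ_[p]) = ((z:ℚ_[p])) from by push_cast; ring]
  have htensor : ∀ (z1 z2 : ℤ) (x y : K),
      ((z1:K) * x + (z2:K) * y) ⊗ₜ[ℚ] (1:ℚ_[p])
        = (z1:ℚ_[p]) • (x ⊗ₜ[ℚ] (1:ℚ_[p])) + (z2:ℚ_[p]) • (y ⊗ₜ[ℚ] (1:ℚ_[p])) := by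
    intro z1 z2 x y
    rw [TensorProduct.add_tmul, hcastK, hcastK, ← TensorProduct.smul_tmul',
      ← TensorProduct.smul_tmul', hcastV, hcastV]
  have hπγ : ϖ * γ = ((T11:ℚ_[p])) • γ + ((T21:ℚ_[p])) • δ := by
    rw [hϖdef, hγdef, Algebra.TensorProduct.tmul_mul_tmul, one_mul, ← hT1, hδdef, htensor]
  have hπδ : ϖ * δ = ((T12:ℚ_[p])) • γ + ((T22:ℚ_[p])) • δ := by
    rw [hϖdef, hδdef, Algebra.TensorProduct.tmul_mul_tmul, one_mul, ← hT2, hγdef, htensor]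
  -- identification of the two spans
  have hspanA : Submodule.span ℤ_[p] ((fun x : K => x ⊗ₜ[ℚ] (1:ℚ_[p])) '' (A : Set K))
      = Submodule.span ℤ_[p] ({γ, δ} : Set (K ⊗[ℚ] ℚ_[p])) := by
    apply le_antisymm
    · rw [Submodule.span_le]
      rintro w ⟨xk, hxk, rfl⟩
      rw [hAspan] at hxk
      obtain ⟨m, n, hmn⟩ := Submodule.mem_span_pair.mp hxk
      have : xk ⊗ₜ[ℚ] (1:ℚ_[p]) = (m:ℚ_[p]) • γ + (n:ℚ_[p]) • δ := by
        rw [← hmn, show m • α + n • β = (m:K)*α + (n:K)*β from by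
          rw [zsmul_eq_mul, zsmul_eq_mul], htensor]
      rw [show (fun x : K => x ⊗ₜ[ℚ] (1:ℚ_[p])) xk = xk ⊗ₜ[ℚ] (1:ℚ_[p]) from rfl, this]
      refine Submodule.add_mem _ ?_ ?_
      · rw [hzmul m γ]
        exact Submodule.smul_mem _ _ (Submodule.subset_span (by simp))
      · rw [hzmul n δ]
        exact Submodule.smul_mem _ _ (Submodule.subset_span (by simp))
    · rw [Submodule.span_le]
      rintro w hw
      rcases hw with rfl | hw
      · exact Submodule.subset_span ⟨α, hαA, rfl⟩
      · rw [Set.mem_singleton_iff] at hw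
        rw [hw]
        exact Submodule.subset_span ⟨β, hβA, rfl⟩
  have hspanO : Submodule.span ℤ_[p] ((fun x : K => x ⊗ₜ[ℚ] (1:ℚ_[p])) ''
        {x : K | ∃ a b : ℤ, x = (a : K) + (b : K) * π})
      = Submodule.span ℤ_[p] ({(1 : K ⊗[ℚ] ℚ_[p]), ϖ} : Set (K ⊗[ℚ] ℚ_[p])) := by
    apply le_antisymm
    · rw [Submodule.span_le]
      rintro w ⟨xk, ⟨a, b, hab⟩, rfl⟩
      have : xk ⊗ₜ[ℚ] (1:ℚ_[p]) = (a:ℚ_[p]) • (1 : K ⊗[ℚ] ℚ_[p]) + (b:ℚ_[p]) • ϖ := by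
        rw [hab, show ((a:K) + (b:K) * π) = ((a:K) * 1 + (b:K) * π) from by ring, htensor, h1V, hϖdef]
      rw [show (fun x : K => x ⊗ₜ[ℚ] (1:ℚ_[p])) xk = xk ⊗ₜ[ℚ] (1:ℚ_[p]) from rfl, this]
      refine Submodule.add_mem _ ?_ ?_
      · rw [hzmul a (1 : K ⊗[ℚ] ℚ_[p])]
        exact Submodule.smul_mem _ _ (Submodule.subset_span (by simp))
      · rw [hzmul b ϖ]
        exact Submodule.smul_mem _ _ (Submodule.subset_span (by simp))
    · rw [Submodule.span_le]
      rintro w hw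
      rcases hw with rfl | hw
      · exact Submodule.subset_span ⟨1, ⟨1, 0, by push_cast; ring⟩, h1V⟩
      · rw [Set.mem_singleton_iff] at hw
        rw [hw]
        exact Submodule.subset_span ⟨π, ⟨0, 1, by push_cast; ring⟩, rfl⟩
  -- hypotheses of `core`
  have ind1V' : ∀ a b : ℚ_[p], a • (1 : K ⊗[ℚ] ℚ_[p]) + b • ϖ = 0 → a = 0 ∧ b = 0 := by
    intro a b h
    exact ind1V a b (by rw [h1V]; exact h)
  have sp1V' : ∀ x : K ⊗[ℚ] ℚ_[p], ∃ a b : ℚ_[p], x = a • (1 : K ⊗[ℚ] ℚ_[p]) + b • ϖ := by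
    intro x
    obtain ⟨a, b, h⟩ := sp1V x
    exact ⟨a, b, by rw [← h1V]; exact h⟩
  have hmodγ : ϖ * γ ∈ Submodule.span ℤ_[p] ({γ, δ} : Set (K ⊗[ℚ] ℚ_[p])) := by
    rw [hπγ]
    exact (mem_span_pair_norm indαβV _ _).mpr
      ⟨Padic.norm_int_le_one _, Padic.norm_int_le_one _⟩
  have hmodδ : ϖ * δ ∈ Submodule.span ℤ_[p] ({γ, δ} : Set (K ⊗[ℚ] ℚ_[p])) := by
    rw [hπδ]
    exact (mem_span_pair_norm indαβV _ _).mpr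
      ⟨Padic.norm_int_le_one _, Padic.norm_int_le_one _⟩
  have hmul1 : ∀ (z : ℤ) (q : ℚ_[p]), ‖q‖ ≤ 1 → ‖(z:ℚ_[p]) * q‖ ≤ 1 := by
    intro z q hq
    rw [norm_mul]
    exact mul_le_one₀ (Padic.norm_int_le_one z) (norm_nonneg q) hq
  have hmul1' : ∀ (q : ℚ_[p]) (z : ℤ), ‖q‖ ≤ 1 → ‖q * (z:ℚ_[p])‖ ≤ 1 := by
    intro q z hq
    rw [mul_comm]
    exact hmul1 z q hq
  have hOV : ∀ x : K ⊗[ℚ] ℚ_[p],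
      x * γ ∈ Submodule.span ℤ_[p] ({γ, δ} : Set (K ⊗[ℚ] ℚ_[p])) →
      x * δ ∈ Submodule.span ℤ_[p] ({γ, δ} : Set (K ⊗[ℚ] ℚ_[p])) →
      x ∈ Submodule.span ℤ_[p] ({(1 : K ⊗[ℚ] ℚ_[p]), ϖ} : Set (K ⊗[ℚ] ℚ_[p])) := by
    intro x h1 h2
    obtain ⟨uu, vv, hx⟩ := sp1V' x
    have hxγ : x * γ = (uu + vv*(T11:ℚ_[p])) • γ + (vv*(T21:ℚ_[p])) • δ := by
      rw [hx, add_mul, smul_mul_assoc, smul_mul_assoc, one_mul, hπγ]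
      module
    have hxδ : x * δ = (vv*(T12:ℚ_[p])) • γ + (uu + vv*(T22:ℚ_[p])) • δ := by
      rw [hx, add_mul, smul_mul_assoc, smul_mul_assoc, one_mul, hπδ]
      module
    obtain ⟨n11, n21⟩ := (mem_span_pair_norm' indαβV _ _ hxγ).mp h1
    obtain ⟨n12, n22⟩ := (mem_span_pair_norm' indαβV _ _ hxδ).mp h2
    have hXYZ' : (X:ℚ_[p])*(T12:ℚ_[p]) + (Y:ℚ_[p])*(T21:ℚ_[p])
        + (Z:ℚ_[p])*((T11:ℚ_[p]) - (T22:ℚ_[p])) = 1 := by exact_mod_cast hXYZ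
    have hkey : vv = (X:ℚ_[p]) * (vv * (T12:ℚ_[p])) + (Y:ℚ_[p]) * (vv * (T21:ℚ_[p]))
        + (Z:ℚ_[p]) * ((uu + vv*(T11:ℚ_[p])) - (uu + vv*(T22:ℚ_[p]))) := by
      linear_combination vv * hXYZ'.symm
    have hdiff : ‖(uu + vv*(T11:ℚ_[p])) - (uu + vv*(T22:ℚ_[p]))‖ ≤ 1 := by
      rw [sub_eq_add_neg]
      refine le_trans (Padic.nonarchimedean _ _) (max_le n11 ?_)
      rw [norm_neg]
      exact n22
    have hv : ‖vv‖ ≤ 1 := by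
      rw [hkey]
      refine le_trans (Padic.nonarchimedean _ _) (max_le ?_ (hmul1 _ _ hdiff))
      exact le_trans (Padic.nonarchimedean _ _)
        (max_le (hmul1 _ _ n12) (hmul1 _ _ n21))
    have hu : ‖uu‖ ≤ 1 := by
      have : uu = (uu + vv*(T11:ℚ_[p])) - vv*(T11:ℚ_[p]) := by ring
      rw [this, sub_eq_add_neg]
      refine le_trans (Padic.nonarchimedean _ _) (max_le n11 ?_)
      rw [norm_neg]
      exact hmul1' _ _ hv
    exact (mem_span_pair_norm' ind1V' uu vv hx).mpr ⟨hu, hv⟩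
  obtain ⟨ap, hap⟩ := LocPrinc.core γ δ ϖ indαβV spαβV ind1V' sp1V' hmodγ hmodδ hOV
  exact ⟨ap, by rw [hspanA, hspanO, hap]⟩
end

section
/- Let p be an odd prime and m a squarefree integer with p ∤ m and pm not a square, and let K = ℚ(√(pm)) (so p ramifies in K). Then the image of the norm map on (K ⊗_ℚ ℚ_p)^× is exactly {(−pm)^n·u² : n ∈ ℤ, u ∈ ℤ_p^×}. -/
set_option maxHeartbeats 1000000

open scoped TensorProduct

section aux
variable {p : ℕ} [Fact p.Prime]

/-- convert a norm-1 element of ℚ_p to a unit of ℤ_p -/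
lemma exists_unit_of_norm_one {v : ℚ_[p]} (hv : ‖v‖ = 1) :
    ∃ u : ℤ_[p]ˣ, ((u : ℤ_[p]) : ℚ_[p]) = v := by
  have hle : ‖v‖ ≤ 1 := hv.le
  set w : ℤ_[p] := ⟨v, hle⟩ with hw
  have hnw : ‖w‖ = 1 := hv
  obtain ⟨u, hu⟩ := PadicInt.isUnit_iff.mpr hnw
  exact ⟨u, by rw [hu]⟩

/-- Hensel: 1 - t is a square of a norm-one element when ‖t‖ < 1 and p ≠ 2. -/
lemma exists_sq_eq_one_sub (hp2 : p ≠ 2) {t : ℚ_[p]} (ht : ‖t‖ < 1) :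
    ∃ s : ℚ_[p], ‖s‖ = 1 ∧ s ^ 2 = 1 - t := by
  have h1t : ‖(1 : ℚ_[p]) - t‖ = 1 := by
    have := Padic.add_eq_max_of_ne (q := (1 : ℚ_[p])) (r := -t)
      (by simpa using ht.ne')
    simpa [sub_eq_add_neg, ht.le, max_eq_left] using this
  set y : ℤ_[p] := ⟨1 - t, h1t.le⟩ with hy
  have hyc : ((y : ℤ_[p]) : ℚ_[p]) = 1 - t := rfl
  set F : Polynomial ℤ_[p] := Polynomial.X ^ 2 - Polynomial.C y with hF
  have heval : F.eval 1 = 1 - y := by simp [hF]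
  have hderiv : F.derivative.eval 1 = 2 := by
    simp [hF, Polynomial.derivative_pow]
  have h2norm : ‖(2 : ℤ_[p])‖ = 1 := by
    have : ¬ ((p : ℤ) ∣ (2 : ℤ)) := by
      rw [show ((2:ℤ)) = ((2:ℕ):ℤ) by norm_num, Int.natCast_dvd_natCast]
      intro h
      exact hp2 ((Nat.prime_dvd_prime_iff_eq (Fact.out : p.Prime) Nat.prime_two).mp h)
    have hlt := PadicInt.norm_int_lt_one_iff_dvd (p := p) (2 : ℤ)
    have hle := PadicInt.norm_le_one ((2 : ℤ) : ℤ_[p])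
    push_cast at hlt hle ⊢
    rcases lt_or_eq_of_le hle with h | h
    · exact absurd (hlt.mp h) this
    · exact h
  have hcond : ‖F.eval 1‖ < ‖F.derivative.eval 1‖ ^ 2 := by
    rw [heval, hderiv, h2norm, one_pow]
    have hco : ((1 - y : ℤ_[p]) : ℚ_[p]) = t := by
      push_cast [hyc]; ring
    rw [PadicInt.norm_def, hco]; exact ht
  obtain ⟨z, hz, -⟩ := hensels_lemma hcond
  have hz2 : z ^ 2 = y := by
    have h : z ^ 2 - y = 0 := by simpa [hF] using hz
    linear_combination h
  have hyn : ‖y‖ = 1 := by rw [PadicInt.norm_def, hyc]; exact h1t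
  have hzn : ‖z‖ = 1 := by
    have h2 : ‖z‖ ^ 2 = 1 := by
      rw [PadicInt.norm_def, ← norm_pow, show ((z:ℚ_[p]))^2 = ((z^2 : ℤ_[p]) : ℚ_[p]) by push_cast; ring, hz2, ← PadicInt.norm_def, hyn]
    nlinarith [norm_nonneg z]
  refine ⟨(z : ℚ_[p]), by rw [← PadicInt.norm_def]; exact hzn, ?_⟩
  rw [← hyc, ← hz2]; push_cast; ring


end aux


section aux2
variable {p : ℕ} [Fact p.Prime]

lemma exists_unit_rep {x : ℚ_[p]} (hx : x ≠ 0) :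
    ∃ (k : ℤ) (w : ℚ_[p]), ‖w‖ = 1 ∧ x = (p : ℚ_[p]) ^ k * w := by
  have hp0R : (0:ℝ) < p := by exact_mod_cast (Fact.out : p.Prime).pos
  have hp0 : (p : ℚ_[p]) ≠ 0 := by
    exact_mod_cast (Nat.cast_ne_zero (R := ℚ_[p])).mpr (Fact.out : p.Prime).ne_zero
  refine ⟨x.valuation, x * (p : ℚ_[p]) ^ (-x.valuation), ?_, ?_⟩
  · rw [norm_mul, norm_zpow, Padic.norm_p, Padic.norm_eq_zpow_neg_valuation hx,
      inv_zpow, ← zpow_neg, neg_neg, ← zpow_add₀ (ne_of_gt hp0R)]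
    simp
  · rw [mul_comm x, ← mul_assoc, ← zpow_add₀ hp0]
    simp

lemma padic_valuation_int_eq_zero {m : ℤ} (hm0 : (m : ℚ_[p]) ≠ 0)
    (hmn : ‖(m : ℚ_[p])‖ = 1) : (m : ℚ_[p]).valuation = 0 := by
  have hp1 : (1:ℝ) < p := by exact_mod_cast (Fact.out : p.Prime).one_lt
  have := Padic.norm_eq_zpow_neg_valuation hm0
  rw [hmn] at this
  have h0 : ((p:ℝ)) ^ (0:ℤ) = (p:ℝ) ^ (-(m : ℚ_[p]).valuation) := by
    rw [zpow_zero]; exact this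
  have := (zpow_right_inj₀ (by linarith) (by linarith)).mp h0
  omega

lemma key_rep (hp2 : p ≠ 2) {m : ℤ} (hm0 : (m : ℚ_[p]) ≠ 0) (hmn : ‖(m : ℚ_[p])‖ = 1)
    {a b z : ℚ_[p]} (hz : z = a ^ 2 - ((p : ℚ_[p]) * m) * b ^ 2) (hz0 : z ≠ 0) :
    ∃ (n : ℤ) (v : ℚ_[p]), ‖v‖ = 1 ∧ z = (-((p : ℚ_[p]) * m)) ^ n * v ^ 2 := by
  have hp0 : (p : ℚ_[p]) ≠ 0 := by
    exact_mod_cast (Nat.cast_ne_zero (R := ℚ_[p])).mpr (Fact.out : p.Prime).ne_zero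
  set c : ℚ_[p] := (p : ℚ_[p]) * m with hc
  have hc0 : c ≠ 0 := mul_ne_zero hp0 hm0
  have hnc0 : -c ≠ 0 := neg_ne_zero.mpr hc0
  -- power identity
  have hpm : ∀ k : ℤ, (-c) ^ (2*k) * ((m : ℚ_[p]) ^ (-k)) ^ 2 = (p : ℚ_[p]) ^ (2*k) := by
    intro k
    rw [Even.neg_zpow ⟨k, two_mul k⟩, hc, mul_zpow,
      ← zpow_natCast ((m : ℚ_[p]) ^ (-k)) 2, ← zpow_mul, mul_assoc,
      ← zpow_add₀ hm0]
    push_cast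
    rw [show (2*k + -k*2 : ℤ) = 0 by ring, zpow_zero, mul_one]
  have hmk : ∀ k : ℤ, ‖(m : ℚ_[p]) ^ (-k)‖ = 1 := by
    intro k; rw [norm_zpow, hmn, one_zpow]
  rcases lt_trichotomy ‖a ^ 2‖ ‖c * b ^ 2‖ with hlt | heq | hgt
  · -- ‖a²‖ < ‖c b²‖ : z = -(c b²)(1 - t)
    have hcb0 : c * b ^ 2 ≠ 0 := by
      intro h; rw [h, norm_zero] at hlt; exact absurd hlt (not_lt.mpr (norm_nonneg _))
    have hb0 : b ≠ 0 := by
      intro h; apply hcb0; rw [h]; ring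
    set t : ℚ_[p] := a ^ 2 / (c * b ^ 2) with hts
    have ht : ‖t‖ < 1 := by
      rw [hts, norm_div, div_lt_one (norm_pos_iff.mpr hcb0)]; exact hlt
    obtain ⟨s, hs1, hs2⟩ := exists_sq_eq_one_sub hp2 ht
    obtain ⟨k, w, hw1, hw2⟩ := exists_unit_rep hb0
    refine ⟨2*k + 1, (m : ℚ_[p]) ^ (-k) * w * s, by
      simp [norm_mul, norm_zpow, hmn, hw1, hs1], ?_⟩
    have hzz : z = -(c * b ^ 2) * s ^ 2 := by
      rw [hs2, hts]; field_simp [hz]; rw [hz]; ring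
    have hb2 : b ^ 2 = (p : ℚ_[p]) ^ (2*k) * w ^ 2 := by
      rw [hw2, mul_pow, ← zpow_natCast ((p:ℚ_[p]) ^ k) 2, ← zpow_mul]
      congr 1
      push_cast
      ring
    calc z = -(c * ((p : ℚ_[p]) ^ (2*k) * w ^ 2)) * s ^ 2 := by rw [hzz, hb2]
      _ = -(c * (((-c) ^ (2*k) * ((m : ℚ_[p]) ^ (-k)) ^ 2) * w ^ 2)) * s ^ 2 := by
          rw [hpm k]
      _ = (-c) ^ (2*k) * (-c) ^ (1:ℤ) * ((m : ℚ_[p]) ^ (-k) * w * s) ^ 2 := by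
          rw [zpow_one]; ring
      _ = (-c) ^ (2*k + 1) * ((m : ℚ_[p]) ^ (-k) * w * s) ^ 2 := by
          rw [← zpow_add₀ hnc0]
  · -- equal norms: impossible
    exfalso
    rcases eq_or_ne a 0 with ha | ha
    · rcases eq_or_ne b 0 with hb | hb
      · apply hz0; rw [hz, ha, hb]; ring
      · rw [ha, zero_pow (by norm_num : (2:ℕ) ≠ 0), norm_zero] at heq
        exact (mul_ne_zero hc0 (pow_ne_zero _ hb)) (norm_eq_zero.mp heq.symm)
    · rcases eq_or_ne b 0 with hb | hb
      · rw [hb, zero_pow (by norm_num : (2:ℕ) ≠ 0), mul_zero, norm_zero] at heq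
        exact (pow_ne_zero 2 ha) (norm_eq_zero.mp heq)
      · -- parity contradiction
        have hp1 : (1:ℝ) < p := by exact_mod_cast (Fact.out : p.Prime).one_lt
        have ha2 : a ^ 2 ≠ 0 := pow_ne_zero _ ha
        have hb2 : b ^ 2 ≠ 0 := pow_ne_zero _ hb
        have hcb : c * b ^ 2 ≠ 0 := mul_ne_zero hc0 hb2
        rw [Padic.norm_eq_zpow_neg_valuation ha2, Padic.norm_eq_zpow_neg_valuation hcb] at heq
        have hvv := (zpow_right_inj₀ (by linarith) (by linarith)).mp heq
        have hva : (a ^ 2).valuation = 2 * a.valuation := by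
          rw [sq, Padic.valuation_mul ha ha]; ring
        have hvb : (b ^ 2).valuation = 2 * b.valuation := by
          rw [sq, Padic.valuation_mul hb hb]; ring
        have hvc : c.valuation = 1 := by
          rw [hc, Padic.valuation_mul hp0 hm0, Padic.valuation_p,
            padic_valuation_int_eq_zero hm0 hmn]
          norm_num
        rw [Padic.valuation_mul hc0 hb2, hva, hvb, hvc] at hvv
        omega
  · -- ‖a²‖ > ‖c b²‖ : z = a²(1 - t)
    have ha20 : a ^ 2 ≠ 0 := by
      intro h; rw [h, norm_zero] at hgt; exact absurd hgt (not_lt.mpr (norm_nonneg _))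
    have ha0 : a ≠ 0 := by intro h; apply ha20; rw [h]; ring
    set t : ℚ_[p] := c * b ^ 2 / a ^ 2 with hts
    have ht : ‖t‖ < 1 := by
      rw [hts, norm_div, div_lt_one (norm_pos_iff.mpr ha20)]; exact hgt
    obtain ⟨s, hs1, hs2⟩ := exists_sq_eq_one_sub hp2 ht
    obtain ⟨k, w, hw1, hw2⟩ := exists_unit_rep ha0
    refine ⟨2*k, (m : ℚ_[p]) ^ (-k) * w * s, by
      simp [norm_mul, norm_zpow, hmn, hw1, hs1], ?_⟩
    have hzz : z = a ^ 2 * s ^ 2 := by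
      rw [hs2, hts]; field_simp [hz]; exact hz
    have ha2 : a ^ 2 = (p : ℚ_[p]) ^ (2*k) * w ^ 2 := by
      rw [hw2, mul_pow, ← zpow_natCast ((p:ℚ_[p]) ^ k) 2, ← zpow_mul]
      congr 1
      push_cast
      ring
    calc z = (p : ℚ_[p]) ^ (2*k) * w ^ 2 * s ^ 2 := by rw [hzz, ha2]
      _ = ((-c) ^ (2*k) * ((m : ℚ_[p]) ^ (-k)) ^ 2) * w ^ 2 * s ^ 2 := by rw [hpm k]
      _ = (-c) ^ (2*k) * ((m : ℚ_[p]) ^ (-k) * w * s) ^ 2 := by ring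

end aux2

lemma norm_formula {R S : Type*} [Field R] [CommRing S] [Algebra R S]
    (bb : Module.Basis (Fin 2) R S) (h0 : bb 0 = 1) {c : R} (ht : bb 1 * bb 1 = c • bb 0)
    (a b : R) : Algebra.norm R (a • bb 0 + b • bb 1) = a ^ 2 - c * b ^ 2 := by
  rw [Algebra.norm_eq_matrix_det bb, Matrix.det_fin_two]
  have key : ∀ j i, Algebra.leftMulMatrix bb (a • bb 0 + b • bb 1) i j
      = bb.repr ((a • bb 0 + b • bb 1) * bb j) i := fun j i =>
    Algebra.leftMulMatrix_eq_repr_mul bb _ i j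
  have hj0 : (a • bb 0 + b • bb 1) * bb 0 = a • bb 0 + b • bb 1 := by
    rw [h0, mul_one]
  have hj1 : (a • bb 0 + b • bb 1) * bb 1 = (c * b) • bb 0 + a • bb 1 := by
    have h00 : bb 0 * bb 1 = bb 1 := by rw [h0, one_mul]
    rw [add_mul, smul_mul_assoc, smul_mul_assoc, h00, ht, smul_smul, mul_comm b c, add_comm]
  rw [key 0 0, key 1 1, key 1 0, key 0 1, hj0, hj1]
  simp [Module.Basis.repr_self, Finsupp.single_apply]
  ring

/-- Let `p` be an odd prime and `m` a squarefree integer with `p ∤ m` and `p·m` not a square,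
and let `K = ℚ(√(pm))` (a quadratic field containing `θ` with `θ² = p·m`; then `p` ramifies
in `K`).  The image of the norm map on `(K ⊗_ℚ ℚ_p)ˣ` is exactly
`{(−pm)^n · u² : n ∈ ℤ, u ∈ ℤ_pˣ}`. -/
theorem norm_image_ramified_odd
    (p : ℕ) [Fact p.Prime] (hp2 : p ≠ 2)
    (m : ℤ) (hmsf : Squarefree m) (hpm : ¬ (p : ℤ) ∣ m) (hnsq : ¬ IsSquare ((p : ℤ) * m))
    (K : Type*) [Field K] [NumberField K] (hdeg : Module.finrank ℚ K = 2)
    (θ : K) (hθ : θ ^ 2 = (((p : ℤ) * m : ℤ) : K)) :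
    {z : ℚ_[p] | ∃ x : (K ⊗[ℚ] ℚ_[p])ˣ,
        Algebra.norm ℚ_[p] ((x : K ⊗[ℚ] ℚ_[p])) = z}
      = {z : ℚ_[p] | ∃ (n : ℤ) (u : ℤ_[p]ˣ),
          z = (-((p : ℚ_[p]) * (m : ℚ_[p]))) ^ n * ((u : ℤ_[p]) : ℚ_[p]) ^ 2} := by
  have hm0 : m ≠ 0 := hmsf.ne_zero
  -- linear independence of 1, θ
  have hnsqQ : ¬ IsSquare (((p : ℤ) * m : ℤ) : ℚ) := by
    rw [Rat.isSquare_intCast_iff]; exact hnsq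
  have li : LinearIndependent ℚ ![(1 : K), θ] := by
    rw [LinearIndependent.pair_iff]
    intro s t hst
    have ht0 : t = 0 := by
      by_contra ht0
      have hθeq : θ = algebraMap ℚ K (-(s / t)) := by
        rw [Algebra.algebraMap_eq_smul_one]
        have h1 : t • θ = (-s) • (1:K) := by
          rw [neg_smul]; exact eq_neg_of_add_eq_zero_right hst
        calc θ = t⁻¹ • (t • θ) := by rw [smul_smul, inv_mul_cancel₀ ht0, one_smul]
          _ = t⁻¹ • ((-s) • (1:K)) := by rw [h1]
          _ = (-(s/t)) • (1:K) := by rw [smul_smul]; congr 1; field_simp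
      apply hnsqQ
      refine ⟨-(s/t), ?_⟩
      have hinj := (algebraMap ℚ K).injective
      apply hinj
      rw [map_mul, ← hθeq, map_intCast, ← hθ, sq]
    rw [ht0, zero_smul, add_zero] at hst
    have hs0 : s = 0 := by
      have : algebraMap ℚ K s = 0 := by
        rw [Algebra.algebraMap_eq_smul_one]; exact hst
      exact (map_eq_zero _).mp this
    exact ⟨hs0, ht0⟩
  -- basis of K
  let bK : Module.Basis (Fin 2) ℚ K :=
    basisOfLinearIndependentOfCardEqFinrank li (by simp [hdeg])
  have hbK : ⇑bK = ![(1 : K), θ] := coe_basisOfLinearIndependentOfCardEqFinrank li _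
  have bK0 : bK 0 = 1 := by rw [hbK]; rfl
  have bK1 : bK 1 = θ := by rw [hbK]; rfl
  -- basis of the base-changed algebra
  let bB : Module.Basis (Fin 2) ℚ_[p] (ℚ_[p] ⊗[ℚ] K) := Algebra.TensorProduct.basis ℚ_[p] bK
  have hB0 : bB 0 = 1 := by
    rw [show bB 0 = (1:ℚ_[p]) ⊗ₜ[ℚ] bK 0 from Algebra.TensorProduct.basis_apply bK 0, bK0]
    rfl
  have hB1 : bB 1 = (1:ℚ_[p]) ⊗ₜ[ℚ] θ := by
    rw [show bB 1 = (1:ℚ_[p]) ⊗ₜ[ℚ] bK 1 from Algebra.TensorProduct.basis_apply bK 1, bK1]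
  set cQ : ℚ_[p] := (p : ℚ_[p]) * (m : ℚ_[p]) with hcQ
  have htt : bB 1 * bB 1 = cQ • bB 0 := by
    rw [hB1, hB0, Algebra.TensorProduct.tmul_mul_tmul, mul_one, ← sq, hθ]
    have h1 : (((p : ℤ) * m : ℤ) : K) = ((p : ℤ) * m : ℤ) • (1 : K) := by
      simp [zsmul_eq_mul]
    rw [h1, TensorProduct.tmul_smul, ← Int.cast_smul_eq_zsmul ℚ_[p]]
    have h2 : (((p : ℤ) * m : ℤ) : ℚ_[p]) = cQ := by push_cast; ring
    rw [h2]
    rfl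
  -- the algebra equivalence
  let e : (K ⊗[ℚ] ℚ_[p]) ≃ₐ[ℚ_[p]] (ℚ_[p] ⊗[ℚ] K) :=
    AlgEquiv.ofRingEquiv (f := (Algebra.TensorProduct.comm ℚ K ℚ_[p]).toRingEquiv)
      (by
        intro x
        show (Algebra.TensorProduct.comm ℚ K ℚ_[p]) ((1:K) ⊗ₜ[ℚ] x) = _
        rw [Algebra.TensorProduct.comm_tmul]
        rw [Algebra.TensorProduct.algebraMap_apply]
        rfl)
  have hmQ0 : (m : ℚ_[p]) ≠ 0 := Int.cast_ne_zero.mpr hm0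
  have hmn : ‖(m : ℚ_[p])‖ = 1 := by
    have hle := Padic.norm_int_le_one (p := p) m
    rcases lt_or_eq_of_le hle with h | h
    · exact absurd ((Padic.norm_intCast_lt_one_iff (k := m)).mp h) hpm
    · exact h
  have hp0 : (p : ℚ_[p]) ≠ 0 := Nat.cast_ne_zero.mpr (Fact.out : p.Prime).ne_zero
  have hcQ0 : cQ ≠ 0 := mul_ne_zero hp0 hmQ0
  have hfr : Module.finrank ℚ_[p] (ℚ_[p] ⊗[ℚ] K) = 2 := by
    rw [Module.finrank_eq_card_basis bB]; simp
  have hNtB : Algebra.norm ℚ_[p] (bB 1) = -cQ := by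
    have h := norm_formula bB hB0 htt 0 1
    simpa using h
  have hTunit : IsUnit (bB 1) := by
    refine IsUnit.of_mul_eq_one (cQ⁻¹ • bB 1) ?_
    rw [Algebra.mul_smul_comm, htt, smul_smul, inv_mul_cancel₀ hcQ0, one_smul, hB0]
  ext z
  simp only [Set.mem_setOf_eq]
  constructor
  · rintro ⟨x, hx⟩
    -- transport to the left-tensor algebra
    obtain ⟨y, hy⟩ := x.isUnit.map e.toRingEquiv.toRingHom
    have hyx : (y : ℚ_[p] ⊗[ℚ] K) = e (x : K ⊗[ℚ] ℚ_[p]) := hy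
    have hNy : Algebra.norm ℚ_[p] (y : ℚ_[p] ⊗[ℚ] K) = z := by
      rw [hyx, Algebra.norm_eq_of_algEquiv e, hx]
    have hz0 : z ≠ 0 := by
      have h1 : Algebra.norm ℚ_[p] ((y : ℚ_[p] ⊗[ℚ] K))
          * Algebra.norm ℚ_[p] (((y⁻¹ : (ℚ_[p] ⊗[ℚ] K)ˣ) : ℚ_[p] ⊗[ℚ] K)) = 1 := by
        rw [← map_mul, Units.mul_inv, map_one]
      rw [hNy] at h1
      exact left_ne_zero_of_mul_eq_one h1
    set a : ℚ_[p] := bB.repr (y : ℚ_[p] ⊗[ℚ] K) 0 with ha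
    set b : ℚ_[p] := bB.repr (y : ℚ_[p] ⊗[ℚ] K) 1 with hb
    have hrep : (y : ℚ_[p] ⊗[ℚ] K) = a • bB 0 + b • bB 1 := by
      have h := bB.sum_repr (y : ℚ_[p] ⊗[ℚ] K)
      rw [Fin.sum_univ_two] at h
      exact h.symm
    have hzval : z = a ^ 2 - cQ * b ^ 2 := by
      rw [← hNy, hrep, norm_formula bB hB0 htt a b]
    obtain ⟨n, v, hv1, hv2⟩ := key_rep hp2 hmQ0 hmn hzval hz0
    obtain ⟨u, hu⟩ := exists_unit_of_norm_one hv1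
    exact ⟨n, u, by rw [hv2, hu]⟩
  · rintro ⟨n, u, rfl⟩
    have huQ0 : ((u : ℤ_[p]) : ℚ_[p]) ≠ 0 := by
      intro h
      exact u.ne_zero ((PadicInt.coe_eq_zero).mp h)
    have hUunit : IsUnit (algebraMap ℚ_[p] (ℚ_[p] ⊗[ℚ] K) ((u : ℤ_[p]) : ℚ_[p])) :=
      (isUnit_iff_ne_zero.mpr huQ0).map (algebraMap ℚ_[p] (ℚ_[p] ⊗[ℚ] K))
    set T : (ℚ_[p] ⊗[ℚ] K)ˣ := hTunit.unit with hT
    set U : (ℚ_[p] ⊗[ℚ] K)ˣ := hUunit.unit with hU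
    set X : (ℚ_[p] ⊗[ℚ] K)ˣ := T ^ n * U with hX
    obtain ⟨x, hx⟩ := X.isUnit.map e.symm.toRingEquiv.toRingHom
    refine ⟨x, ?_⟩
    have hxX : (x : K ⊗[ℚ] ℚ_[p]) = e.symm (X : ℚ_[p] ⊗[ℚ] K) := hx
    have hNX : Algebra.norm ℚ_[p] ((x : K ⊗[ℚ] ℚ_[p]))
        = Algebra.norm ℚ_[p] ((X : ℚ_[p] ⊗[ℚ] K)) := by
      rw [hxX, ← Algebra.norm_eq_of_algEquiv e, AlgEquiv.apply_symm_apply]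
    rw [hNX]
    -- compute the norm of X via the units norm hom
    set φ : (ℚ_[p] ⊗[ℚ] K)ˣ →* ℚ_[p]ˣ := Units.map (Algebra.norm ℚ_[p]) with hφ
    have hcoe : ∀ w : (ℚ_[p] ⊗[ℚ] K)ˣ,
        ((φ w : ℚ_[p]ˣ) : ℚ_[p]) = Algebra.norm ℚ_[p] ((w : ℚ_[p] ⊗[ℚ] K)) :=
      fun w => by rw [hφ, Units.coe_map]
    have h1 : Algebra.norm ℚ_[p] ((X : ℚ_[p] ⊗[ℚ] K))
        = ((φ T ^ n * φ U : ℚ_[p]ˣ) : ℚ_[p]) := by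
      rw [← hcoe X, hX, map_mul, map_zpow]
    have hφT : ((φ T : ℚ_[p]ˣ) : ℚ_[p]) = -cQ := by
      rw [hcoe T, hT, IsUnit.unit_spec, hNtB]
    have hφU : ((φ U : ℚ_[p]ˣ) : ℚ_[p]) = ((u : ℤ_[p]) : ℚ_[p]) ^ 2 := by
      rw [hcoe U, hU, IsUnit.unit_spec, Algebra.norm_algebraMap, hfr]
    rw [h1, Units.val_mul, Units.val_zpow_eq_zpow_val, hφT, hφU]
end

section
/- Let K be a quadratic field, f a positive integer, and p an odd prime dividing f. Then the image under the norm map of the unit group of O_{f,p} = ℤ_p + ℤ_p·fω is exactly the set (ℤ_p^×)² of squares of p-adic units. -/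
open scoped TensorProduct

/-- The local order `O_{f,p} = ℤ_p + ℤ_p·fω` inside `K_p = K ⊗_ℚ ℚ_p`. -/
def localOrder (p : ℕ) [Fact p.Prime] (K : Type*) [Field K] [Algebra ℚ K]
    (ω : K) (f : ℕ) : Set (K ⊗[ℚ] ℚ_[p]) :=
  {x | ∃ a b : ℤ_[p],
    x = (1 : K) ⊗ₜ[ℚ] ((a : ℚ_[p])) + ((f : K) * ω) ⊗ₜ[ℚ] ((b : ℚ_[p]))}

/-- `K ⊗[ℚ] ℚ_p` (with the right-factor `ℚ_p`-algebra structure) is `ℚ_p`-isomorphic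
to `ℚ_p ⊗[ℚ] K` (with the usual left-factor structure). -/
noncomputable def commQp (p : ℕ) [Fact p.Prime] (K : Type*) [Field K] [Algebra ℚ K] :
    (K ⊗[ℚ] ℚ_[p]) ≃ₐ[ℚ_[p]] (ℚ_[p] ⊗[ℚ] K) :=
  AlgEquiv.ofRingEquiv (f := (Algebra.TensorProduct.comm ℚ K ℚ_[p]).toRingEquiv)
    (fun c => by
      show (Algebra.TensorProduct.comm ℚ K ℚ_[p]) ((1 : K) ⊗ₜ c) = _
      simp [Algebra.TensorProduct.algebraMap_apply])

lemma commQp_tmul (p : ℕ) [Fact p.Prime] (K : Type*) [Field K] [Algebra ℚ K]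
    (k : K) (c : ℚ_[p]) : commQp p K (k ⊗ₜ[ℚ] c) = c ⊗ₜ[ℚ] k := rfl

set_option maxHeartbeats 2000000 in
/-- Let `K` be a quadratic field with ring of integers `ℤ + ℤω`, `f` a positive integer,
and `p` an odd prime dividing `f`.  Then the image under the norm map of the unit group of
`O_{f,p} = ℤ_p + ℤ_p·fω` is exactly the set of squares of `p`-adic units. -/
theorem norm_image_localOrder_units_odd
    (K : Type*) [Field K] [NumberField K] (hdeg : Module.finrank ℚ K = 2)
    (ω : K) (hω : ∀ x : K, IsIntegral ℤ x ↔ ∃ a b : ℤ, x = (a : K) + (b : K) * ω)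
    (f : ℕ) (hf : 0 < f)
    (p : ℕ) [Fact p.Prime] (hp2 : p ≠ 2) (hpf : p ∣ f) :
    {z : ℚ_[p] | ∃ x ∈ localOrder p K ω f,
        (∃ y ∈ localOrder p K ω f, x * y = 1) ∧ Algebra.norm ℚ_[p] x = z}
      = {z : ℚ_[p] | ∃ u : ℤ_[p]ˣ, z = ((u : ℤ_[p]) : ℚ_[p]) ^ 2} := by
  -- ω is integral and satisfies a monic quadratic relation over ℤ
  have hωint : IsIntegral ℤ ω := (hω ω).mpr ⟨0, 1, by push_cast; ring⟩
  obtain ⟨A, T, hωsq⟩ := (hω (ω * ω)).mp (hωint.mul hωint)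
  -- {1, ω} is a ℚ-basis of K
  have hcard : Fintype.card (Fin 2) = Module.finrank ℚ K := by simp [hdeg]
  have hspan : ⊤ ≤ Submodule.span ℚ (Set.range ![1, ω]) := by
    intro x _
    have halg : IsAlgebraic ℤ x := by
      rw [IsFractionRing.isAlgebraic_iff ℤ ℚ K]
      exact isAlgebraic_iff_isIntegral.mpr (IsIntegral.of_finite ℚ x)
    obtain ⟨y, n, hn, hyn⟩ : ∃ y : integralClosure ℤ K, ∃ n : ℤ, n ≠ 0 ∧ (n : K) * x = y := by
      obtain ⟨n, hn, hint⟩ := halg.exists_integral_multiple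
      exact ⟨⟨n • x, hint⟩, n, hn, by simp [Algebra.smul_def]⟩
    obtain ⟨a, b, hab⟩ := (hω (y : K)).mp y.2
    have hmul : (n : K) * x = (a : K) + (b : K) * ω := by
      rw [← hab]; exact_mod_cast hyn
    have hn' : (n : K) ≠ 0 := by exact_mod_cast hn
    have hx : x = ((a : ℚ)/(n : ℚ)) • (1:K) + ((b : ℚ)/(n : ℚ)) • ω := by
      rw [Algebra.smul_def, Algebra.smul_def, map_div₀, map_div₀, map_intCast,
        map_intCast, map_intCast, mul_one]
      field_simp
      linear_combination hmul
    have hr : Set.range ![ (1:K), ω] = {1, ω} := by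
      simp [Matrix.range_cons, Matrix.range_empty, Set.pair_comm]
    rw [hr]
    exact Submodule.mem_span_pair.mpr ⟨_, _, hx.symm⟩
  obtain ⟨bK, hb⟩ : ∃ bK : Module.Basis (Fin 2) ℚ K, ⇑bK = ![1, ω] :=
    ⟨basisOfTopLeSpanOfCardEqFinrank ![1, ω] hspan hcard,
      coe_basisOfTopLeSpanOfCardEqFinrank ![1, ω] hspan hcard⟩
  -- the norm formula on ℚ_p ⊗ K
  have key : ∀ α β : ℚ_[p],
      Algebra.norm ℚ_[p] (α ⊗ₜ[ℚ] (1:K) + β ⊗ₜ[ℚ] ω : ℚ_[p] ⊗[ℚ] K)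
        = α^2 + (T : ℚ_[p]) * (α * β) - (A : ℚ_[p]) * β^2 := by
    intro α β
    have e0 : bK 0 = 1 := by rw [hb]; rfl
    have e1 : bK 1 = ω := by rw [hb]; rfl
    have hωω : ω * ω = (A : ℚ) • (1:K) + (T : ℚ) • ω := by
      rw [hωsq, Algebra.smul_def, Algebra.smul_def, map_intCast, map_intCast, mul_one]
    set B := bK.baseChange ℚ_[p] with hB
    set x : ℚ_[p] ⊗[ℚ] K := α ⊗ₜ[ℚ] (1:K) + β ⊗ₜ[ℚ] ω with hx
    have hx0 : x * B 0 = α ⊗ₜ[ℚ] (1:K) + β ⊗ₜ[ℚ] ω := by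
      simp [hx, hB, Module.Basis.baseChange_apply, e0, add_mul,
        Algebra.TensorProduct.tmul_mul_tmul]
    have hx1 : x * B 1 = ((A:ℚ_[p]) * β) ⊗ₜ[ℚ] (1:K) + (α + (T:ℚ_[p]) * β) ⊗ₜ[ℚ] ω := by
      have h : x * B 1 = α ⊗ₜ[ℚ] ω + β ⊗ₜ[ℚ] (ω * ω) := by
        simp [hx, hB, Module.Basis.baseChange_apply, e1, add_mul,
          Algebra.TensorProduct.tmul_mul_tmul]
      rw [h, hωω, TensorProduct.tmul_add, ← TensorProduct.smul_tmul,
        ← TensorProduct.smul_tmul, Rat.smul_def, Rat.smul_def]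
      push_cast
      rw [TensorProduct.add_tmul]
      ring_nf
    have hrep : ∀ (γ δ : ℚ_[p]) (i : Fin 2),
        B.repr (γ ⊗ₜ[ℚ] (1:K) + δ ⊗ₜ[ℚ] ω) i
          = γ * (bK.repr 1 i : ℚ) + δ * (bK.repr ω i : ℚ) := by
      intro γ δ i
      rw [map_add]
      simp [hB, Module.Basis.baseChange_repr_tmul, Rat.smul_def, mul_comm]
    have r10 : bK.repr 1 0 = 1 := by rw [← e0]; simp
    have r11 : bK.repr 1 1 = 0 := by rw [← e0]; simp
    have rω0 : bK.repr ω 0 = 0 := by rw [← e1]; simp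
    have rω1 : bK.repr ω 1 = 1 := by rw [← e1]; simp
    rw [Algebra.norm_eq_matrix_det B, Matrix.det_fin_two]
    simp only [Algebra.leftMulMatrix_eq_repr_mul, hx0, hx1, hrep, r10, r11, rω0, rω1]
    push_cast
    ring
  -- the norm of elements of the local order
  have hN : ∀ a b : ℤ_[p],
      Algebra.norm ℚ_[p]
          ((1 : K) ⊗ₜ[ℚ] ((a : ℚ_[p])) + ((f : K) * ω) ⊗ₜ[ℚ] ((b : ℚ_[p])))
        = ((a^2 + T*(a*((f:ℤ_[p])*b)) - A*((f:ℤ_[p])*b)^2 : ℤ_[p]) : ℚ_[p]) := by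
    intro a b
    have he : commQp p K
        ((1 : K) ⊗ₜ[ℚ] ((a : ℚ_[p])) + ((f : K) * ω) ⊗ₜ[ℚ] ((b : ℚ_[p])))
        = (a : ℚ_[p]) ⊗ₜ[ℚ] (1:K) + ((f : ℚ_[p]) * (b : ℚ_[p])) ⊗ₜ[ℚ] ω := by
      rw [map_add, commQp_tmul, commQp_tmul]
      congr 1
      have hfω : (f : K) * ω = (f : ℚ) • ω := by
        rw [Algebra.smul_def, map_natCast]
      rw [hfω, ← TensorProduct.smul_tmul, Rat.smul_def]
      norm_cast
    rw [← Algebra.norm_eq_of_algEquiv (commQp p K), he, key]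
    push_cast
    ring
  clear key hb hspan hcard hωint hωsq hω hdeg hf
  ext z
  simp only [Set.mem_setOf_eq, localOrder]
  constructor
  · rintro ⟨x, ⟨a, b, rfl⟩, ⟨y, ⟨c, d, rfl⟩, hxy⟩, rfl⟩
    set C : ℤ_[p] := a^2 + T*(a*((f:ℤ_[p])*b)) - A*((f:ℤ_[p])*b)^2 with hC
    set C' : ℤ_[p] := c^2 + T*(c*((f:ℤ_[p])*d)) - A*((f:ℤ_[p])*d)^2 with hC'
    have hmul : (C : ℚ_[p]) * (C' : ℚ_[p]) = 1 := by
      rw [← hN a b, ← hN c d, ← map_mul, hxy, map_one]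
    have hCC' : C * C' = 1 := by
      have h1 : ((C * C' : ℤ_[p]) : ℚ_[p]) = ((1 : ℤ_[p]) : ℚ_[p]) := by push_cast; exact hmul
      exact Subtype.coe_injective h1
    have hCunit : IsUnit C := ⟨⟨C, C', hCC', by rw [mul_comm]; exact hCC'⟩, rfl⟩
    have hnormC : ‖C‖ = 1 := PadicInt.isUnit_iff.mp hCunit
    obtain ⟨m, hm⟩ := hpf
    have hfm : (f : ℤ_[p]) = (p : ℤ_[p]) * (m : ℤ_[p]) := by push_cast [hm]; ring
    set s : ℤ_[p] := T*(a*((m:ℤ_[p])*b)) - A*((p:ℤ_[p]))*(((m:ℤ_[p]))*b)^2 with hs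
    have hCs : C = a^2 + (p : ℤ_[p]) * s := by rw [hC, hs, hfm]; ring
    have hpnorm : ‖(p : ℤ_[p])‖ = (p : ℝ)⁻¹ := PadicInt.norm_p
    have hp1 : (1 : ℝ) < p := by exact_mod_cast (Fact.out : p.Prime).one_lt
    have hplt : (p : ℝ)⁻¹ < 1 := by
      rw [inv_lt_one_iff₀]; right; exact hp1
    have hanorm : ‖a‖ = 1 := by
      by_contra h
      have ha1 : ‖a‖ < 1 := lt_of_le_of_ne (PadicInt.norm_le_one a) h
      have h2 : ‖a^2‖ < 1 := by
        rw [sq, norm_mul]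
        nlinarith [norm_nonneg a]
      have h3 : ‖(p:ℤ_[p]) * s‖ < 1 := by
        rw [norm_mul, hpnorm]
        have hh : (p:ℝ)⁻¹ * ‖s‖ ≤ (p:ℝ)⁻¹ * 1 :=
          mul_le_mul_of_nonneg_left (PadicInt.norm_le_one s) (by positivity)
        linarith
      have h4 := PadicInt.nonarchimedean (a^2) ((p:ℤ_[p])*s)
      rw [← hCs] at h4
      rcases max_cases ‖a^2‖ ‖(p:ℤ_[p])*s‖ with ⟨he', _⟩ | ⟨he', _⟩ <;>
        rw [he'] at h4 <;> linarith
    -- Hensel's lemma for X² - C with approximate root a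
    set F : Polynomial ℤ_[p] := Polynomial.X^2 - Polynomial.C C with hF
    have hFa : F.eval a = -((p:ℤ_[p]) * s) := by
      simp [hF, hCs]
    have hFd : F.derivative.eval a = 2 * a := by
      simp [hF]; left; norm_num
    have h2norm : ‖(2 : ℤ_[p])‖ = 1 := by
      refine le_antisymm (PadicInt.norm_le_one _) (not_lt.mp ?_)
      intro hlt
      have : ((p:ℤ)) ∣ 2 := by
        rw [← PadicInt.norm_int_lt_one_iff_dvd]
        exact_mod_cast hlt
      have hp2' : p ∣ 2 := by exact_mod_cast this
      have h2le : p ≤ 2 := Nat.le_of_dvd two_pos hp2'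
      have h2ge : 2 ≤ p := (Fact.out : p.Prime).two_le
      omega
    have hhn : ‖F.eval a‖ < ‖F.derivative.eval a‖^2 := by
      rw [hFa, hFd, norm_neg, norm_mul, norm_mul, hpnorm, h2norm,
        hanorm]
      have hh : (p:ℝ)⁻¹ * ‖s‖ ≤ (p:ℝ)⁻¹ * 1 :=
        mul_le_mul_of_nonneg_left (PadicInt.norm_le_one s) (by positivity)
      nlinarith
    obtain ⟨zz, hz, -⟩ := hensels_lemma (F := F) (a := a) (by simpa only [Polynomial.coe_aeval_eq_eval] using hhn)
    have hz2 : zz^2 = C := by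
      have h' := hz
      simp only [Polynomial.coe_aeval_eq_eval, hF, Polynomial.eval_sub, Polynomial.eval_pow, Polynomial.eval_X,
        Polynomial.eval_C, sub_eq_zero] at h'
      exact h'
    have hzu : IsUnit zz := by
      refine isUnit_of_mul_isUnit_left (y := zz) ?_
      rw [← sq, hz2]; exact hCunit
    refine ⟨hzu.unit, ?_⟩
    rw [hN a b, IsUnit.unit_spec, ← hC, ← hz2]
    push_cast
    ring
  · rintro ⟨u, rfl⟩
    refine ⟨(1 : K) ⊗ₜ[ℚ] (((u : ℤ_[p]) : ℚ_[p])),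
      ⟨(u : ℤ_[p]), 0, by push_cast; simp⟩,
      ⟨(1 : K) ⊗ₜ[ℚ] ((((u⁻¹ : ℤ_[p]ˣ) : ℤ_[p]) : ℚ_[p])),
        ⟨((u⁻¹ : ℤ_[p]ˣ) : ℤ_[p]), 0, by push_cast; simp⟩, ?_⟩, ?_⟩
    · rw [Algebra.TensorProduct.tmul_mul_tmul, one_mul]
      rw [← PadicInt.coe_mul]
      rw [show ((u : ℤ_[p]) * ((u⁻¹ : ℤ_[p]ˣ) : ℤ_[p])) = 1 by exact_mod_cast u.mul_inv]
      simp [Algebra.TensorProduct.one_def]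
    · have hrw : (1 : K) ⊗ₜ[ℚ] (((u : ℤ_[p]) : ℚ_[p]))
          = (1 : K) ⊗ₜ[ℚ] (((u : ℤ_[p]) : ℚ_[p]))
            + ((f : K) * ω) ⊗ₜ[ℚ] (((0 : ℤ_[p]) : ℚ_[p])) := by
        push_cast
        simp
      rw [hrw, hN]
      push_cast
      ring
end

section
/- Let K be a quadratic field with fundamental discriminant D_K, f a positive integer, D = f²·D_K, and let (δ₁, δ₂) be a reciprocal pair of fundamental divisors of D with δ₁δ₂ = f₁²·D_K, f₁ | f. For a prime p, set e = ord_p(f) and m_p = ord_p(f/f₁). Then: (1) if m_p < e, then p | δ₁ and p | δ₂; (2) conversely, if p | δ₁, p | δ₂, and p ∤ D_K, then m_p < e. -/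
/-- `δ` is a fundamental discriminant (the discriminant of a quadratic field): either
`δ ≡ 1 (mod 4)`, squarefree and `δ ≠ 1`, or `δ = 4m` with `m` squarefree and
`m ≡ 2, 3 (mod 4)`. -/
def IsFundamentalDiscriminant (δ : ℤ) : Prop :=
  (δ % 4 = 1 ∧ Squarefree δ ∧ δ ≠ 1) ∨
    (δ % 4 = 0 ∧ Squarefree (δ / 4) ∧ (δ / 4 % 4 = 2 ∨ δ / 4 % 4 = 3))

/-- A fundamental divisor of `D`: a divisor `δ` of `D` which is either `1` or a
fundamental discriminant, and such that `D/δ ≡ 0` or `1 (mod 4)`. -/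
def IsFundamentalDivisor (D δ : ℤ) : Prop :=
  δ ∣ D ∧ (δ = 1 ∨ IsFundamentalDiscriminant δ) ∧ (D / δ % 4 = 0 ∨ D / δ % 4 = 1)

/-- Cayley–Hamilton for `2 × 2` integer matrices. -/
lemma cayley_two (Z : Matrix (Fin 2) (Fin 2) ℤ) : Z * Z = Z.trace • Z - Z.det • 1 := by
  ext i j
  rw [Matrix.sub_apply, Matrix.smul_apply, Matrix.smul_apply, Matrix.mul_apply,
    Matrix.trace_fin_two, Matrix.det_fin_two, Fin.sum_univ_two]
  fin_cases i <;> fin_cases j <;> simp [Matrix.one_apply] <;> ring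

lemma trace_mul_self_two (Z : Matrix (Fin 2) (Fin 2) ℤ) :
    (Z * Z).trace = Z.trace * Z.trace - 2 * Z.det := by
  rw [cayley_two Z, Matrix.trace_sub, Matrix.trace_smul, Matrix.trace_smul, Matrix.trace_one]
  simp [smul_eq_mul, Fintype.card_fin]
  ring

/-- The key trace identity for commuting `2 × 2` integer matrices. -/
lemma comm_trace_identity (X Y : Matrix (Fin 2) (Fin 2) ℤ) (hcomm : X * Y = Y * X) :
    (X*Y).trace^2 - X.trace*Y.trace*(X*Y).trace + X.trace^2*Y.det + Y.trace^2*X.det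
      - 4*(X.det*Y.det) = 0 := by
  have h5 : (X*Y)*(X*Y) = (X*X)*(Y*Y) := by
    rw [mul_assoc, ← mul_assoc Y X Y, ← hcomm, mul_assoc, ← mul_assoc]
  have h5' : (X*Y).trace • (X*Y) - ((X*Y).det) • (1 : Matrix (Fin 2) (Fin 2) ℤ)
      = (X.trace • X - X.det • 1) * (Y.trace • Y - Y.det • 1) := by
    rw [← cayley_two, h5, cayley_two X, cayley_two Y]
  have h6 := congrArg Matrix.trace h5'
  simp only [Matrix.trace_sub, Matrix.trace_smul, sub_mul, mul_sub, smul_mul_assoc,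
    mul_smul_comm, smul_smul, Matrix.trace_add, Matrix.trace_one, Matrix.det_mul, one_mul,
    mul_one, smul_eq_mul] at h6
  simp only [Fintype.card_fin, Nat.cast_ofNat] at h6
  linear_combination h6

open NumberField in
/-- Stickelberger's theorem for quadratic fields: the discriminant is `0` or `1` mod `4`. -/
lemma discr_quadratic_mod_four (K : Type*) [Field K] [NumberField K]
    (hdeg : Module.finrank ℚ K = 2) :
    NumberField.discr K % 4 = 0 ∨ NumberField.discr K % 4 = 1 := by
  have hrank : Module.finrank ℤ (𝓞 K) = 2 := by rw [RingOfIntegers.rank, hdeg]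
  have hcard : Fintype.card (Module.Free.ChooseBasisIndex ℤ (𝓞 K)) = 2 := by
    rw [← Module.finrank_eq_card_chooseBasisIndex, hrank]
  let b : Module.Basis (Fin 2) ℤ (𝓞 K) :=
    (RingOfIntegers.basis K).reindex (Fintype.equivFinOfCardEq hcard)
  set M := Algebra.leftMulMatrix b with hM
  set x := b 0
  set y := b 1
  have hT : ∀ z : 𝓞 K, Algebra.trace ℤ (𝓞 K) z = (M z).trace :=
    fun z => Algebra.trace_eq_matrix_trace b z
  have hd : NumberField.discr K
      = (M x * M x).trace * (M y * M y).trace - (M x * M y).trace * (M x * M y).trace := by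
    rw [← NumberField.discr_eq_discr K b, Algebra.discr_def, Matrix.det_fin_two]
    simp only [Algebra.traceMatrix_apply, Algebra.traceForm_apply]
    rw [hT (b 0 * b 0), hT (b 1 * b 1), hT (b 0 * b 1), hT (b 1 * b 0),
      map_mul M (b 0) (b 0), map_mul M (b 1) (b 1), map_mul M (b 0) (b 1),
      map_mul M (b 1) (b 0)]
    have : M (b 1) * M (b 0) = M (b 0) * M (b 1) := by
      rw [← map_mul M, ← map_mul M, mul_comm]
    rw [this]
  have hcomm : M x * M y = M y * M x := by rw [← map_mul M, ← map_mul M, mul_comm]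
  have hI := comm_trace_identity (M x) (M y) hcomm
  have hd2 : NumberField.discr K
      = ((M x).trace * (M y).trace - (M x * M y).trace)^2 - 4 * ((M x).det * (M y).det) := by
    rw [hd, trace_mul_self_two (M x), trace_mul_self_two (M y)]
    linear_combination (-2 : ℤ) * hI
  set B := (M x).trace * (M y).trace - (M x * M y).trace with hB
  rcases Int.even_or_odd B with ⟨k, hk⟩ | ⟨k, hk⟩
  · obtain ⟨c, hc⟩ : ∃ c, NumberField.discr K = 4 * c :=
      ⟨k*k - ((M x).det * (M y).det), by rw [hd2, hk]; ring⟩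
    left; omega
  · obtain ⟨c, hc⟩ : ∃ c, NumberField.discr K = 4 * c + 1 :=
      ⟨k*k + k - ((M x).det * (M y).det), by rw [hd2, hk]; ring⟩
    right; omega

/-- If `δ₁ δ₂ = f₁² Dk` with `Dk ≡ 0, 1 (mod 4)`, both `δᵢ` equal to `1` or fundamental
discriminants, and `p ∣ f₁`, then `p ∣ δ₁`. -/
lemma key_dvd (Dk : ℤ) (hDk4 : Dk % 4 = 0 ∨ Dk % 4 = 1) (f₁ : ℕ) (δ₁ δ₂ : ℤ)
    (h1 : δ₁ = 1 ∨ IsFundamentalDiscriminant δ₁)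
    (h2 : δ₂ = 1 ∨ IsFundamentalDiscriminant δ₂)
    (hrec : δ₁ * δ₂ = (f₁ : ℤ) ^ 2 * Dk)
    (p : ℕ) (hp : p.Prime) (hpf : p ∣ f₁) :
    (p : ℤ) ∣ δ₁ := by
  by_contra hnd
  have hpZ : Prime (p : ℤ) := Int.prime_iff_natAbs_prime.mpr (by simpa using hp)
  have hpu : ¬ IsUnit (p : ℤ) := hpZ.not_unit
  have hcop : IsCoprime ((p:ℤ)^2) δ₁ := ((hpZ.coprime_iff_not_dvd).mpr hnd).pow_left
  have hdvd : ((p:ℤ)^2) ∣ δ₁ * δ₂ := by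
    rw [hrec]
    exact Dvd.dvd.mul_right (pow_dvd_pow_of_dvd (Int.natCast_dvd_natCast.mpr hpf) 2) Dk
  have hδ₂ : ((p:ℤ)^2) ∣ δ₂ := hcop.dvd_of_dvd_mul_left hdvd
  rcases h2 with rfl | h2f
  · exact hpu (isUnit_of_dvd_one (dvd_trans (dvd_pow_self (p:ℤ) two_ne_zero) hδ₂))
  rcases h2f with ⟨_, hsf, _⟩ | ⟨hmod, hsfm, hm4⟩
  · exact hpu (hsf (p:ℤ) (by rwa [← pow_two]))
  · set m := δ₂ / 4 with hm
    have h4 : δ₂ = 4 * m := by omega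
    by_cases hp2 : p = 2
    · subst hp2
      have hodd1 : ¬ (2:ℤ) ∣ δ₁ := by exact_mod_cast hnd
      have hd14 : δ₁ % 4 = 1 := by
        rcases h1 with rfl | hf1
        · norm_num
        rcases hf1 with ⟨h, _⟩ | ⟨h, _⟩
        · exact h
        · exact absurd (by omega : (2:ℤ) ∣ δ₁) hodd1
      obtain ⟨f₂, hf₂⟩ := hpf
      have hrec2 : δ₁ * m = (f₂ : ℤ)^2 * Dk := by
        apply mul_left_cancel₀ (show (4:ℤ) ≠ 0 by norm_num)
        rw [h4, hf₂] at hrec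
        push_cast at hrec
        linear_combination hrec
      have e1 : (δ₁ * m) % 4 = m % 4 := by
        rw [Int.mul_emod, hd14, one_mul, Int.emod_emod_of_dvd _ dvd_rfl]
      have hf₂odd : ¬ (2:ℤ) ∣ (f₂:ℤ) := by
        rintro ⟨k, hk⟩
        have h44 : (4:ℤ) ∣ δ₁ * m := ⟨k^2 * Dk, by rw [hrec2, hk]; ring⟩
        omega
      obtain ⟨k, hk⟩ : ∃ k : ℤ, (f₂:ℤ) = 2*k+1 := by
        rcases Int.even_or_odd (f₂:ℤ) with ⟨k, hk⟩ | ⟨k, hk⟩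
        · exact absurd ⟨k, by omega⟩ hf₂odd
        · exact ⟨k, hk⟩
      have hsq : ((f₂:ℤ))^2 % 4 = 1 := by
        obtain ⟨c, hc⟩ : ∃ c : ℤ, (f₂:ℤ)^2 = 4*c+1 := ⟨k*k+k, by rw [hk]; ring⟩
        rw [hc]; omega
      have e2 : ((f₂:ℤ)^2 * Dk) % 4 = Dk % 4 := by
        rw [Int.mul_emod, hsq, one_mul, Int.emod_emod_of_dvd _ dvd_rfl]
      rw [hrec2, e2] at e1
      omega
    · have hp4 : ¬ (p:ℤ) ∣ 4 := by
        intro h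
        have hn : p ∣ 4 := by exact_mod_cast h
        have h2 : p ∣ 2 := hp.dvd_of_dvd_pow (n := 2)
          (by rwa [show (4:ℕ) = 2^2 by norm_num] at hn)
        exact hp2 ((Nat.prime_dvd_prime_iff_eq hp Nat.prime_two).mp h2)
      have hcop4 : IsCoprime ((p:ℤ)^2) 4 := ((hpZ.coprime_iff_not_dvd).mpr hp4).pow_left
      have hdm : ((p:ℤ)^2) ∣ m := hcop4.dvd_of_dvd_mul_left (by rw [← h4]; exact hδ₂)
      exact hpu (hsfm (p:ℤ) (by rwa [← pow_two]))

/-- Let `K` be a quadratic field with fundamental discriminant `D_K`, `f` a positive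
integer, `D = f²·D_K`, and `(δ₁, δ₂)` a reciprocal pair of fundamental divisors of `D`
with `δ₁δ₂ = f₁²·D_K`, `f₁ ∣ f`.  For a prime `p` set `e = ord_p(f)`, `m_p = ord_p(f/f₁)`.
Then (1) if `m_p < e` then `p ∣ δ₁` and `p ∣ δ₂`; (2) conversely if `p ∣ δ₁`, `p ∣ δ₂`
and `p ∤ D_K` then `m_p < e`. -/
theorem fundamental_divisor_valuation
    (K : Type*) [Field K] [NumberField K] (hdeg : Module.finrank ℚ K = 2)
    (f : ℕ) (hf : 0 < f) (δ₁ δ₂ : ℤ)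
    (h1 : IsFundamentalDivisor ((f : ℤ) ^ 2 * NumberField.discr K) δ₁)
    (h2 : IsFundamentalDivisor ((f : ℤ) ^ 2 * NumberField.discr K) δ₂)
    (f₁ : ℕ) (hf₁pos : 0 < f₁) (hf₁div : f₁ ∣ f)
    (hrec : δ₁ * δ₂ = (f₁ : ℤ) ^ 2 * NumberField.discr K)
    (p : ℕ) (hp : p.Prime) :
    (padicValNat p (f / f₁) < padicValNat p f → (p : ℤ) ∣ δ₁ ∧ (p : ℤ) ∣ δ₂) ∧
    ((p : ℤ) ∣ δ₁ → (p : ℤ) ∣ δ₂ → ¬ (p : ℤ) ∣ NumberField.discr K →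
      padicValNat p (f / f₁) < padicValNat p f) := by
  have hDk4 := discr_quadratic_mod_four K hdeg
  haveI : Fact p.Prime := ⟨hp⟩
  obtain ⟨g, hg⟩ := hf₁div
  have hf₁0 : f₁ ≠ 0 := hf₁pos.ne'
  have hg0 : g ≠ 0 := by rintro rfl; simp [hg] at hf
  have hdivq : f / f₁ = g := by rw [hg]; exact Nat.mul_div_cancel_left g hf₁pos
  have hval : padicValNat p f = padicValNat p f₁ + padicValNat p g := by
    rw [hg]; exact padicValNat.mul hf₁0 hg0
  have hiff : padicValNat p (f / f₁) < padicValNat p f ↔ p ∣ f₁ := by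
    rw [hdivq, hval]
    constructor
    · intro h
      by_contra hnd
      rw [padicValNat.eq_zero_of_not_dvd hnd] at h
      omega
    · intro h
      have := one_le_padicValNat_of_dvd hf₁0 h
      omega
  constructor
  · intro hlt
    have hpf₁ : p ∣ f₁ := hiff.mp hlt
    exact ⟨key_dvd _ hDk4 f₁ δ₁ δ₂ h1.2.1 h2.2.1 hrec p hp hpf₁,
      key_dvd _ hDk4 f₁ δ₂ δ₁ h2.2.1 h1.2.1 (by rw [mul_comm]; exact hrec) p hp hpf₁⟩
  · intro hd1 _ hndk
    apply hiff.mpr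
    have hpZ : Prime (p : ℤ) := Int.prime_iff_natAbs_prime.mpr (by simpa using hp)
    have hdd : (p:ℤ) ∣ (f₁:ℤ)^2 * NumberField.discr K := hrec ▸ hd1.mul_right δ₂
    rcases hpZ.dvd_mul.mp hdd with h | h
    · exact_mod_cast hpZ.dvd_of_dvd_pow h
    · exact absurd h hndk
end

section
/- Let K be a real quadratic field with fundamental discriminant D_K. Then −1 = N_{K/ℚ}(c) for some c ∈ K^× if and only if every odd prime divisor of D_K is congruent to 1 modulo 4. -/
open NumberField Matrix

lemma descent_aux {q : ℕ} (hq : q.Prime) (h3 : q % 4 = 3) {d : ℤ} (hd : Squarefree d)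
    (hqd : (q : ℤ) ∣ d) : ∀ Y X W : ℤ, X ^ 2 + W ^ 2 = d * Y ^ 2 → W = 0 := by
  haveI : Fact q.Prime := ⟨hq⟩
  have hq2 : (2 : ℤ) ≤ (q : ℤ) := by exact_mod_cast hq.two_le
  have hqZ : Prime (q : ℤ) := Nat.prime_iff_prime_int.mp hq
  suffices H : ∀ n : ℕ, ∀ Y X W : ℤ, Y.natAbs ≤ n → X ^ 2 + W ^ 2 = d * Y ^ 2 → W = 0 by
    exact fun Y X W h => H Y.natAbs Y X W le_rfl h
  intro n
  induction n with
  | zero =>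
    intro Y X W hY heq
    have hY0 : Y = 0 := by omega
    subst hY0
    nlinarith [sq_nonneg X, sq_nonneg W]
  | succ n ih =>
    intro Y X W hY heq
    rcases eq_or_ne Y 0 with rfl | hY0
    · nlinarith [sq_nonneg X, sq_nonneg W]
    -- q divides X^2 + W^2
    have hdvd : (q : ℤ) ∣ X ^ 2 + W ^ 2 := heq ▸ Dvd.dvd.mul_right hqd _
    have hzero : ((X : ZMod q)) ^ 2 + (W : ZMod q) ^ 2 = 0 := by
      have := (ZMod.intCast_zmod_eq_zero_iff_dvd _ q).2 hdvd
      push_cast at this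
      linear_combination this
    -- q divides W
    have hqW : (q : ℤ) ∣ W := by
      by_contra hW
      have hW' : (W : ZMod q) ≠ 0 := fun h => hW ((ZMod.intCast_zmod_eq_zero_iff_dvd _ q).1 h)
      have : IsSquare (-1 : ZMod q) := by
        refine ⟨(X : ZMod q) * ((W : ZMod q))⁻¹, ?_⟩
        have hWinv : (W : ZMod q) * ((W : ZMod q))⁻¹ = 1 := ZMod.mul_inv_of_unit _ (Ne.isUnit hW')
        linear_combination (-(((W:ZMod q))⁻¹^2)) * hzero + (((W : ZMod q) * ((W : ZMod q))⁻¹) + 1) * hWinv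
      exact (ZMod.exists_sq_eq_neg_one_iff.1 this) h3
    have hqX : (q : ℤ) ∣ X := by
      have : (q : ℤ) ∣ X ^ 2 := by
        have : (q:ℤ)^2 ∣ W ^ 2 := pow_dvd_pow_of_dvd hqW 2
        exact (dvd_add_right (dvd_trans (dvd_pow_self _ two_ne_zero) this)).1
          (by rw [add_comm] at hdvd; exact hdvd)
      exact hqZ.dvd_of_dvd_pow this
    -- q divides Y
    obtain ⟨e, he⟩ := hqd
    have hqe : ¬ (q : ℤ) ∣ e := by
      intro hee
      obtain ⟨f, hf⟩ := hee
      have : ¬ IsUnit (q : ℤ) := hqZ.not_unit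
      exact this (hd q (by rw [he, hf]; ring_nf; exact ⟨f, by ring⟩))
    have hqY : (q : ℤ) ∣ Y := by
      have h2 : (q : ℤ) ^ 2 ∣ X ^ 2 + W ^ 2 := by
        rcases hqX with ⟨x, rfl⟩; rcases hqW with ⟨w, rfl⟩
        exact ⟨x ^ 2 + w ^ 2, by ring⟩
      rw [heq, he] at h2
      have : (q : ℤ) ∣ e * Y ^ 2 := by
        obtain ⟨g, hg⟩ := h2
        refine ⟨g, ?_⟩
        have hqne : (q : ℤ) ≠ 0 := by omega
        have : (q:ℤ) * (e * Y^2) = (q:ℤ) * ((q:ℤ) * g) := by ring_nf; ring_nf at hg; linarith [hg]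
        exact mul_left_cancel₀ hqne this
      rcases (hqZ.dvd_mul).1 this with h | h
      · exact absurd h hqe
      · exact hqZ.dvd_of_dvd_pow h
    obtain ⟨X', rfl⟩ := hqX
    obtain ⟨W', rfl⟩ := hqW
    obtain ⟨Y', rfl⟩ := hqY
    have hY'lt : Y'.natAbs ≤ n := by
      have : Y'.natAbs < ((q:ℤ) * Y').natAbs := by
        rw [Int.natAbs_mul]
        have hY'0 : Y'.natAbs ≠ 0 := by
          simp only [ne_eq, Int.natAbs_eq_zero]
          rintro rfl; simp at hY0
        have h2 : 2 ≤ (q:ℤ).natAbs := by omega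
        nlinarith [hY'0.bot_lt]
      omega
    have heq' : X' ^ 2 + W' ^ 2 = d * Y' ^ 2 := by
      have hqne : ((q : ℤ))^2 ≠ 0 := by positivity
      have : (q:ℤ)^2 * (X' ^ 2 + W' ^ 2) = (q:ℤ)^2 * (d * Y' ^ 2) := by ring_nf; ring_nf at heq; linarith [heq]
      exact mul_left_cancel₀ hqne this
    have := ih Y' X' W' hY'lt heq'
    rw [this, mul_zero]

lemma discr_sq_factor {K : Type*} [Field K] [NumberField K] {ι : Type*} [Fintype ι]
    [DecidableEq ι] (b : Module.Basis ι ℚ K) (hb : ∀ i, IsIntegral ℤ (b i)) :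
    ∃ m : ℤ, Algebra.discr ℚ ⇑b = (m : ℚ) ^ 2 * (NumberField.discr K : ℚ) := by
  classical
  set e := (integralBasis K).reindex ((integralBasis K).indexEquiv b) with he
  have hdiscr_e : Algebra.discr ℚ ⇑e = (NumberField.discr K : ℚ) := by
    rw [he, Module.Basis.coe_reindex, Algebra.discr_reindex, coe_discr]
  have hvec : ⇑e ᵥ* ((e.toMatrix ⇑b).map (algebraMap ℚ K)) = ⇑b := e.toMatrix_map_vecMul ⇑b
  have hint : ∀ i j, IsIntegral ℤ (e.toMatrix ⇑b i j) := by
    intro i j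
    have hbj : b j = algebraMap (𝓞 K) K (show 𝓞 K from ⟨b j, (mem_integralClosure_iff ℤ K).mpr (hb j)⟩) := rfl
    rw [Module.Basis.toMatrix_apply, he, Module.Basis.repr_reindex_apply, hbj, integralBasis_repr_apply]
    exact isIntegral_algebraMap
  have hdet : IsIntegral ℤ (e.toMatrix ⇑b).det := IsIntegral.det fun i j => hint i j
  obtain ⟨m, hm⟩ := IsIntegrallyClosed.isIntegral_iff.mp hdet
  refine ⟨m, ?_⟩
  have := Algebra.discr_of_matrix_vecMul (A := ℚ) (B := K) ⇑e (e.toMatrix ⇑b)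
  rw [hvec, hdiscr_e] at this
  rw [this, ← hm]
  norm_num

/-- Let `K` be a real quadratic field with fundamental discriminant `D_K`.  Then `−1` is
the norm of an element of `K^×` if and only if every odd prime divisor of `D_K` is
congruent to `1` modulo `4`. -/
theorem neg_one_is_norm_iff
    (K : Type*) [Field K] [NumberField K] (hdeg : Module.finrank ℚ K = 2)
    (hreal : Nonempty (K →+* ℝ)) :
    (∃ c : K, Algebra.norm ℚ c = -1) ↔
      ∀ q : ℕ, q.Prime → q ≠ 2 → (q : ℤ) ∣ NumberField.discr K → q % 4 = 1 := by
  classical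
  -- Step 1: find `γ ∉ ℚ` with `γ ^ 2 = a`, `a` a squarefree natural number, `2 ≤ a`.
  obtain ⟨γ, a, hsf, ha2, hγ2, hγ⟩ :
      ∃ (γ : K) (a : ℕ), Squarefree a ∧ 2 ≤ a ∧ γ ^ 2 = algebraMap ℚ K (a : ℚ) ∧
        γ ∉ (⊥ : Subalgebra ℚ K) := by
    have hbotne : (⊥ : Subalgebra ℚ K) ≠ ⊤ := by
      intro h
      have h1 := Subalgebra.bot_eq_top_iff_finrank_eq_one.mp h
      rw [h1] at hdeg
      exact absurd hdeg (by norm_num)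
    obtain ⟨α, hα⟩ : ∃ α : K, α ∉ (⊥ : Subalgebra ℚ K) := by
      by_contra h
      push_neg at h
      exact hbotne (eq_top_iff.mpr fun x _ => h x)
    have hintα : IsIntegral ℚ α := IsIntegral.of_finite ℚ α
    have hmono : (minpoly ℚ α).Monic := minpoly.monic hintα
    have hnd : (minpoly ℚ α).natDegree = 2 := by
      have h1 : (minpoly ℚ α).natDegree ≤ 2 := hdeg ▸ minpoly.natDegree_le α
      have h2 : (minpoly ℚ α).natDegree ≠ 1 := by
        intro h
        obtain ⟨r, hr⟩ := minpoly.natDegree_eq_one_iff.mp h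
        exact hα (Algebra.mem_bot.mpr ⟨r, hr⟩)
      have h3 := minpoly.natDegree_pos hintα
      omega
    set c1 : ℚ := (minpoly ℚ α).coeff 1 with hc1
    set c0 : ℚ := (minpoly ℚ α).coeff 0 with hc0
    have haev : α ^ 2 + algebraMap ℚ K c1 * α + algebraMap ℚ K c0 * 1 = 0 := by
      have h := minpoly.aeval ℚ α
      rw [Polynomial.aeval_eq_sum_range, hnd] at h
      rw [Finset.sum_range_succ, Finset.sum_range_succ, Finset.sum_range_one] at h
      have hlead : (minpoly ℚ α).coeff 2 = 1 := by
        have := hmono.coeff_natDegree; rwa [hnd] at this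
      rw [hlead, one_smul, pow_zero, pow_one] at h
      rw [Algebra.smul_def, Algebra.smul_def] at h
      linear_combination h
    set β : K := α + algebraMap ℚ K (c1 / 2) with hβdef
    have hβmem : β ∉ (⊥ : Subalgebra ℚ K) := by
      intro hmem
      apply hα
      have hh : α = β - algebraMap ℚ K (c1 / 2) := by rw [hβdef]; ring
      rw [hh]
      exact Subalgebra.sub_mem _ hmem (Subalgebra.algebraMap_mem _ _)
    set r : ℚ := c1 ^ 2 / 4 - c0 with hrdef
    have hβ2 : β ^ 2 = algebraMap ℚ K r := by
      rw [hβdef, hrdef]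
      simp only [map_sub, map_div₀, map_pow, map_ofNat]
      linear_combination haev
    have hrne : r ≠ 0 := by
      intro h
      rw [h, map_zero] at hβ2
      have hb0 : β = 0 := by
        have h2 : β * β = 0 := by linear_combination hβ2
        rcases mul_eq_zero.mp h2 with h | h <;> exact h
      exact hβmem (hb0 ▸ Subalgebra.zero_mem _)
    have hrpos : 0 < r := by
      obtain ⟨ρ⟩ := hreal
      have h1 : (ρ β) ^ 2 = (r : ℝ) := by
        rw [← map_pow, hβ2, eq_ratCast (algebraMap ℚ K) r]
        exact map_ratCast ρ r
      have h2 : (0 : ℝ) ≤ (r : ℝ) := h1 ▸ sq_nonneg _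
      have h3 : (0 : ℚ) ≤ r := by exact_mod_cast h2
      exact lt_of_le_of_ne h3 (Ne.symm hrne)
    set N : ℕ := r.num.toNat * r.den with hNdef
    have hnum_pos : 0 < r.num := Rat.num_pos.mpr hrpos
    have hdq : ((r.den : ℚ)) ≠ 0 := by exact_mod_cast r.den_ne_zero
    have hNq : (N : ℚ) = r * (r.den : ℚ) ^ 2 := by
      have h1 : ((r.num.toNat : ℚ)) = (r.num : ℚ) := by
        have : (r.num.toNat : ℤ) = r.num := Int.toNat_of_nonneg hnum_pos.le
        exact_mod_cast congrArg (fun z : ℤ => (z : ℚ)) this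
      have h2 : (r.num : ℚ) = r * r.den := (div_eq_iff hdq).1 (Rat.num_div_den r)
      rw [hNdef]
      push_cast
      rw [h1, h2]
      ring
    have hNpos : 0 < N := by
      have h1 : 0 < r.num.toNat := by omega
      exact Nat.mul_pos h1 r.pos
    clear_value c1 c0 β r N
    obtain ⟨a, bb, hab, hsfa⟩ := Nat.sq_mul_squarefree N
    have hbbne : bb ≠ 0 := by
      rintro rfl
      simp only [zero_pow, ne_eq, OfNat.ofNat_ne_zero, not_false_eq_true, zero_mul] at hab
      omega
    have hbbq : ((bb : ℚ)) ≠ 0 := by exact_mod_cast hbbne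
    set γ0 : K := ((r.den : ℚ) / bb) • β with hγ0def
    have hγ0sq : γ0 ^ 2 = algebraMap ℚ K (a : ℚ) := by
      rw [hγ0def, smul_pow, hβ2, Algebra.smul_def, ← _root_.map_mul]
      congr 1
      have habq : ((bb : ℚ)) ^ 2 * (a : ℚ) = (N : ℚ) := by exact_mod_cast hab
      have h2 : ((bb : ℚ)) ^ 2 * (a : ℚ) = r * (r.den : ℚ) ^ 2 := by rw [habq, hNq]
      rw [div_pow, div_mul_eq_mul_div, div_eq_iff (pow_ne_zero 2 hbbq)]
      linear_combination -h2
    have hγ0mem : γ0 ∉ (⊥ : Subalgebra ℚ K) := by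
      intro hmem
      apply hβmem
      have hne : ((r.den : ℚ) / bb) ≠ 0 := div_ne_zero hdq hbbq
      have hh : β = ((r.den : ℚ) / bb)⁻¹ • γ0 := by
        rw [hγ0def, smul_smul, inv_mul_cancel₀ hne, one_smul]
      rw [hh]
      exact (⊥ : Subalgebra ℚ K).smul_mem hmem _
    have ha0 : a ≠ 0 := by
      rintro rfl
      rw [mul_zero] at hab
      omega
    have ha1 : a ≠ 1 := by
      rintro rfl
      have h1 : γ0 ^ 2 = 1 := by rw [hγ0sq]; norm_num
      have h2 : (γ0 - 1) * (γ0 + 1) = 0 := by linear_combination h1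
      rcases mul_eq_zero.mp h2 with h | h
      · have : γ0 = 1 := by linear_combination h
        exact hγ0mem (this ▸ Subalgebra.one_mem _)
      · have : γ0 = -1 := by linear_combination h
        exact hγ0mem (this ▸ Subalgebra.neg_mem _ (Subalgebra.one_mem _))
    exact ⟨γ0, a, hsfa, by omega, hγ0sq, hγ0mem⟩
  have hane : (a : ℚ) ≠ 0 := by
    have : a ≠ 0 := by omega
    exact_mod_cast this
  have hγne : γ ≠ 0 := by
    intro h
    apply hane
    apply (algebraMap ℚ K).injective
    rw [map_zero, ← hγ2, h]
    ring
  -- Step 2: the basis `{1, γ}`.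
  have li : LinearIndependent ℚ ![(1 : K), γ] := by
    rw [linearIndependent_fin2]
    refine ⟨by simpa using hγne, fun c hc => ?_⟩
    simp only [Matrix.cons_val_one, Matrix.head_cons, Matrix.cons_val_zero] at hc
    have hc0 : c ≠ 0 := by rintro rfl; simpa using hc.symm
    apply hγ
    rw [Algebra.mem_bot]
    refine ⟨c⁻¹, ?_⟩
    rw [Algebra.algebraMap_eq_smul_one, ← hc, smul_smul, inv_mul_cancel₀ hc0, one_smul]
  have hcard : Fintype.card (Fin 2) = Module.finrank ℚ K := by simp [hdeg]
  set B : Module.Basis (Fin 2) ℚ K := basisOfLinearIndependentOfCardEqFinrank li hcard with hBdef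
  have hB : ⇑B = ![(1 : K), γ] := coe_basisOfLinearIndependentOfCardEqFinrank li hcard
  have hB0 : B 0 = 1 := by rw [hB]; rfl
  have hB1 : B 1 = γ := by rw [hB]; rfl
  -- representation lemma
  have hrepr : ∀ x y : ℚ, ∀ i, (B.repr (x • (1:K) + y • γ)) i = ![x, y] i := by
    intro x y i
    rw [show (1:K) = B 0 from hB0.symm, show γ = B 1 from hB1.symm, map_add,
      LinearEquiv.map_smul, LinearEquiv.map_smul, B.repr_self, B.repr_self]
    fin_cases i <;> simp [Finsupp.single_apply]
  -- γ * γ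
  have hγγ : γ * γ = (a : ℚ) • (1 : K) := by
    rw [← pow_two, hγ2, Algebra.algebraMap_eq_smul_one]
  -- left multiplication matrix
  have hM : ∀ x y : ℚ, Algebra.leftMulMatrix B (x • (1:K) + y • γ) =
      !![x, (a : ℚ) * y; y, x] := by
    intro x y
    have hmul1 : (x • (1:K) + y • γ) * γ = ((a : ℚ) * y) • (1:K) + x • γ := by
      rw [add_mul, smul_mul_assoc, smul_mul_assoc, one_mul, hγγ, smul_smul, mul_comm y]
      ring_nf
    ext i j
    rw [Algebra.leftMulMatrix_eq_repr_mul]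
    fin_cases j
    · show (B.repr ((x • (1:K) + y • γ) * B 0)) i = !![x, (a : ℚ) * y; y, x] i 0
      rw [hB0, mul_one, hrepr]
      fin_cases i <;> rfl
    · show (B.repr ((x • (1:K) + y • γ) * B 1)) i = !![x, (a : ℚ) * y; y, x] i 1
      rw [hB1, hmul1, hrepr]
      fin_cases i <;> rfl
  -- norm formula
  have hnorm : ∀ x y : ℚ, Algebra.norm ℚ (x • (1:K) + y • γ) = x ^ 2 - (a : ℚ) * y ^ 2 := by
    intro x y
    rw [Algebra.norm_eq_matrix_det B, hM, Matrix.det_fin_two_of]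
    ring
  -- trace formula
  have htr : ∀ x y : ℚ, Algebra.trace ℚ K (x • (1:K) + y • γ) = 2 * x := by
    intro x y
    rw [Algebra.trace_eq_matrix_trace B, hM, Matrix.trace_fin_two_of]
    ring
  -- the discriminant of the basis B
  have hD : Algebra.discr ℚ ⇑B = 4 * (a : ℚ) := by
    have e00 : B 0 * B 0 = (1:ℚ) • (1:K) + (0:ℚ) • γ := by rw [hB0]; simp
    have e01 : B 0 * B 1 = (0:ℚ) • (1:K) + (1:ℚ) • γ := by rw [hB0, hB1]; simp
    have e10 : B 1 * B 0 = (0:ℚ) • (1:K) + (1:ℚ) • γ := by rw [hB0, hB1]; simp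
    have e11 : B 1 * B 1 = ((a:ℚ)) • (1:K) + (0:ℚ) • γ := by rw [hB1]; simpa using hγγ
    rw [Algebra.discr_def]
    have : Algebra.traceMatrix ℚ ⇑B = !![2, 0; 0, 2 * (a:ℚ)] := by
      ext i j
      rw [Algebra.traceMatrix_apply, Algebra.traceForm_apply]
      fin_cases i
      · fin_cases j
        · show Algebra.trace ℚ K (B 0 * B 0) = !![2, 0; 0, 2 * (a:ℚ)] 0 0
          rw [e00, htr]; norm_num
        · show Algebra.trace ℚ K (B 0 * B 1) = !![2, 0; 0, 2 * (a:ℚ)] 0 1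
          rw [e01, htr]; norm_num
      · fin_cases j
        · show Algebra.trace ℚ K (B 1 * B 0) = !![2, 0; 0, 2 * (a:ℚ)] 1 0
          rw [e10, htr]; norm_num
        · show Algebra.trace ℚ K (B 1 * B 1) = !![2, 0; 0, 2 * (a:ℚ)] 1 1
          rw [e11, htr]; norm_num
    rw [this, Matrix.det_fin_two_of]
    ring
  -- integrality of the basis
  have hint : ∀ i, IsIntegral ℤ (B i) := by
    intro i
    fin_cases i
    · show IsIntegral ℤ (B 0); rw [hB0]; exact isIntegral_one
    · show IsIntegral ℤ (B 1); rw [hB1]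
      refine ⟨Polynomial.X ^ 2 - Polynomial.C (a : ℤ), ?_, ?_⟩
      · exact Polynomial.monic_X_pow_sub_C _ (by norm_num)
      · simp only [Polynomial.eval₂_sub, Polynomial.eval₂_X_pow, Polynomial.eval₂_C, hγ2]
        rw [show (algebraMap ℤ K) (a : ℤ) = algebraMap ℚ K (a : ℚ) by
          simp [map_natCast]]
        ring
  obtain ⟨m, hm⟩ := discr_sq_factor B hint
  rw [hD] at hm
  have h4a : 4 * (a : ℤ) = m ^ 2 * NumberField.discr K := by exact_mod_cast hm
  -- divisibility bridge
  have hbridge : ∀ q : ℕ, q.Prime → q ≠ 2 →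
      ((q : ℤ) ∣ NumberField.discr K ↔ (q : ℤ) ∣ (a : ℤ)) := by
    intro q hq hq2
    have hqZ : Prime (q : ℤ) := Nat.prime_iff_prime_int.mp hq
    have hq2' : ¬ (q : ℤ) ∣ 4 := by
      intro h
      have : (q:ℤ) ∣ 2 := hqZ.dvd_of_dvd_pow (n := 2) (by norm_num [show ((2:ℤ))^2 = 4 by norm_num, h])
      have h2 : q ∣ 2 := by exact_mod_cast this
      exact hq2 ((Nat.prime_dvd_prime_iff_eq hq Nat.prime_two).mp h2)
    constructor
    · intro h
      have : (q : ℤ) ∣ 4 * (a : ℤ) := h4a ▸ Dvd.dvd.mul_left h _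
      rcases hqZ.dvd_mul.1 this with h' | h'
      · exact absurd h' hq2'
      · exact h'
    · intro h
      have hqm : ¬ (q : ℤ) ∣ m := by
        intro hm'
        have hsq : (q : ℤ) ^ 2 ∣ 4 * (a : ℤ) := h4a ▸ (pow_dvd_pow_of_dvd hm' 2).mul_right _
        have hnat : q ^ 2 ∣ 4 * a := by exact_mod_cast hsq
        have hcop : (q ^ 2).Coprime 4 := by
          have : q.Coprime 2 := (Nat.coprime_primes hq Nat.prime_two).2 hq2
          exact (this.pow_left 2).mul_right (this.pow_left 2)
        have : q ^ 2 ∣ a := hcop.dvd_of_dvd_mul_left hnat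
        exact hq.not_isUnit (hsf q (by rwa [← pow_two] ))
      have : (q : ℤ) ∣ m ^ 2 * NumberField.discr K := by
        rw [← h4a]; exact Dvd.dvd.mul_left h 4
      rcases hqZ.dvd_mul.1 this with h' | h'
      · exact absurd (hqZ.dvd_of_dvd_pow h') hqm
      · exact h'
  constructor
  · -- forward direction
    rintro ⟨c, hc⟩ q hq hq2 hqD
    haveI : Fact q.Prime := ⟨hq⟩
    have hodd : q % 2 = 1 := (Nat.Prime.mod_two_eq_one_iff_ne_two hq).mpr hq2
    by_contra h14
    have h3 : q % 4 = 3 := by omega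
    have hqa : (q : ℤ) ∣ (a : ℤ) := (hbridge q hq hq2).1 hqD
    -- write c in the basis
    set x : ℚ := B.repr c 0 with hx
    set y : ℚ := B.repr c 1 with hy
    have hcxy : x • (1:K) + y • γ = c := by
      have := B.sum_repr c
      rw [Fin.sum_univ_two, hB0, hB1] at this
      exact this
    have hc' : x ^ 2 - (a : ℚ) * y ^ 2 = -1 := by
      rw [← hnorm x y, hcxy, hc]
    -- clear denominators
    set X : ℤ := x.num * y.den with hX
    set Y : ℤ := y.num * x.den with hY
    set W : ℤ := (x.den : ℤ) * y.den with hW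
    have hWne : W ≠ 0 := by
      simp only [hW]
      positivity
    have hdx : ((x.den : ℚ)) ≠ 0 := by exact_mod_cast x.den_ne_zero
    have hdy : ((y.den : ℚ)) ≠ 0 := by exact_mod_cast y.den_ne_zero
    have hxnum : (x.num : ℚ) = x * x.den := (div_eq_iff hdx).1 (Rat.num_div_den x)
    have hynum : (y.num : ℚ) = y * y.den := (div_eq_iff hdy).1 (Rat.num_div_den y)
    have hXW : X ^ 2 + W ^ 2 = (a : ℤ) * Y ^ 2 := by
      have : ((X ^ 2 + W ^ 2 : ℤ) : ℚ) = (((a : ℤ) * Y ^ 2 : ℤ) : ℚ) := by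
        push_cast [hX, hY, hW]
        rw [hxnum, hynum]
        linear_combination ((x.den : ℚ))^2 * ((y.den:ℚ))^2 * hc'
      exact_mod_cast this
    have := descent_aux hq h3 (Int.squarefree_natCast.mpr hsf) hqa Y X W hXW
    exact hWne this
  · -- backward direction
    intro H
    have hsum : ∃ u v : ℕ, a = u ^ 2 + v ^ 2 := by
      apply Nat.eq_sq_add_sq_of_isSquare_mod_neg_one
      suffices H' : ∀ q : ℕ, q.Prime → q ∣ a → q % 4 ≠ 3 from
        (ZMod.isSquare_neg_one_iff_forall_mem_primeFactors_mod_four_ne_three hsf).2 fun q hmem =>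
          H' q (Nat.prime_of_mem_primeFactors hmem) (Nat.dvd_of_mem_primeFactors hmem)
      intro q hq hqa
      by_cases hq2 : q = 2
      · subst hq2; norm_num
      · have : (q : ℤ) ∣ NumberField.discr K :=
          (hbridge q hq hq2).2 (by exact_mod_cast hqa)
        have := H q hq hq2 this
        omega
    obtain ⟨u, v, huv⟩ := hsum
    have hvne : v ≠ 0 := by
      rintro rfl
      have ha' : a = u * u := by rw [huv]; ring
      have hu := hsf u (ha' ▸ dvd_rfl)
      rw [Nat.isUnit_iff] at hu
      rw [hu] at ha'
      omega
    have hv : ((v : ℚ)) ≠ 0 := by exact_mod_cast hvne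
    refine ⟨((u : ℚ) / v) • (1:K) + ((1 : ℚ) / v) • γ, ?_⟩
    rw [hnorm]
    have haq : (a : ℚ) = (u:ℚ) ^ 2 + (v:ℚ) ^ 2 := by exact_mod_cast huv
    field_simp
    linear_combination -haq
end
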